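/- arXiv:0907.4083 — 2 statements merged into one kernel-verified Lean document; each statement's English description precedes it below -/
import Mathlib

section
/- For every 0 < ξ ≤ 1/4 and every positive integer k there exists ℓ ∈ ℕ such that for all integers n ≥ ℓ the following holds. Let (n_i)_{i∈[k]}, (a_j)_{j∈[ℓ]}, and (b_j)_{j∈[ℓ]} be partitions of n into nonnegative integers such that n_i ≤ n/8 for all i ∈ [k] and a_j + b_j ≤ (1+ξ)·2n/ℓ for all j ∈ [ℓ]. Then there exists a map φ : [ℓ] → [k] such that for every i ∈ [k], writing ā_i = Σ_{j ∈ φ⁻¹(i)} a_j and b̄_i = Σ_{j ∈ φ⁻¹(i)} b_j, we have ā_i < n_i + ξn and b̄_i < n_i + ξn. -/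
/-!
Order the indices `j` so that the running sums of the `a_j` and of the `b_j` never differ by more
than `M = (1 + ξ) · 2n / ℓ`, the bound on `a_j + b_j`: this is possible greedily, always appending
an index whose `a_j - b_j` has the sign opposite to the current difference. Then cut this order
into `k` consecutive blocks where the running `a`-sum crosses the thresholds `n_1 + ⋯ + n_i`.
Block `i` gets `a`-weight at most `n_i + M` and, as the `b`-sums stay within `M` of the `a`-sums,
`b`-weight at most `n_i + 3M`. Finally `3M < ξn` once `ℓ > 6(1 + ξ)/ξ`.
-/

open Finset

theorem List.sum_map_sub {G ι : Type*} [AddCommGroup G] (l : List ι) (f g : ι → G) :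
    (l.map fun x => f x - g x).sum = (l.map f).sum - (l.map g).sum := by
  induction l with
  | nil => simp
  | cons x l ih => simp only [List.map_cons, List.sum_cons, ih]; abel

theorem sum_take_idxOf_succ {M ι : Type*} [AddMonoid M] [DecidableEq ι] (c : ι → M) {l : List ι}
    {j : ι} (hj : j ∈ l) :
    ((l.map c).take (l.idxOf j + 1)).sum = ((l.map c).take (l.idxOf j)).sum + c j := by
  have hlt : l.idxOf j < l.length := List.idxOf_lt_length_iff.2 hj
  rw [List.sum_take_succ _ _ (by simpa using hlt), List.getElem_map, List.getElem_idxOf hlt]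

section SumBelow

variable {M : Type*} [AddCommMonoid M] {k : ℕ}

def sumBelow (n : Fin k → M) (m : ℕ) : M :=
  ∑ i ∈ univ.filter (fun i : Fin k => (i : ℕ) < m), n i

@[simp]
theorem sumBelow_zero (n : Fin k → M) : sumBelow n 0 = 0 := by
  simp [sumBelow]

theorem sumBelow_self (n : Fin k → M) : sumBelow n k = ∑ i, n i := by
  simp [sumBelow]

theorem sumBelow_succ (n : Fin k → M) (i : Fin k) : sumBelow n (i + 1) = sumBelow n i + n i := by
  have : univ.filter (fun j : Fin k => (j : ℕ) < i + 1) =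
      insert i (univ.filter fun j : Fin k => (j : ℕ) < i) := by
    ext j; simp only [mem_filter, mem_univ, true_and, mem_insert, Fin.ext_iff]; omega
  rw [sumBelow, this, sum_insert (by simp), add_comm, sumBelow]

end SumBelow

section OrderedGroup

variable {α ι : Type*} [AddCommGroup α] [LinearOrder α] [IsOrderedAddMonoid α]

theorem exists_mem_abs_add_le {f : ι → α} {M P : α} {l : List ι} (hl : l ≠ [])
    (hP : |P| ≤ M) (hf : ∀ x ∈ l, |f x| ≤ M) (hsum : P + (l.map f).sum = 0) :
    ∃ x ∈ l, |P + f x| ≤ M := by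
  rw [abs_le] at hP
  rcases le_or_gt 0 P with hP0 | hP0
  · obtain ⟨x, hx, hfx⟩ : ∃ x ∈ l, f x ≤ 0 := by
      by_contra! h
      have := List.sum_pos (l.map f) (by simpa using h) (by simpa using hl)
      exact (add_pos_of_nonneg_of_pos hP0 this).ne' hsum
    refine ⟨x, hx, abs_le.2 ⟨?_, ?_⟩⟩
    · exact (abs_le.1 (hf x hx)).1.trans (le_add_of_nonneg_left hP0)
    · exact (add_le_of_nonpos_right hfx).trans hP.2
  · obtain ⟨x, hx, hfx⟩ : ∃ x ∈ l, 0 ≤ f x := by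
      by_contra! h
      have := List.sum_pos ((l.map f).map Neg.neg) (by simpa using h) (by simpa using hl)
      rw [← List.sum_neg, neg_pos] at this
      exact (add_neg hP0 this).ne hsum
    refine ⟨x, hx, abs_le.2 ⟨?_, ?_⟩⟩
    · exact hP.1.trans (le_add_of_nonneg_right hfx)
    · exact (add_le_of_nonpos_left hP0.le).trans (abs_le.1 (hf x hx)).2

theorem exists_perm_abs_add_sum_take_le [DecidableEq ι] (f : ι → α) {M : α} (l : List ι)
    {P : α} (hP : |P| ≤ M) (hf : ∀ x ∈ l, |f x| ≤ M) (hsum : P + (l.map f).sum = 0) :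
    ∃ l' : List ι, l'.Perm l ∧ ∀ t, |P + ((l'.map f).take t).sum| ≤ M := by
  induction hn : l.length generalizing l P with
  | zero => exact ⟨[], by simp_all, fun t => by simpa using hP⟩
  | succ n ih =>
    obtain ⟨x, hx, hPx⟩ := exists_mem_abs_add_le (List.ne_nil_of_length_eq_add_one hn) hP hf hsum
    have hperm := List.perm_cons_erase hx
    obtain ⟨l', hl', hbound⟩ := ih (l.erase x) hPx (fun y hy => hf y (List.mem_of_mem_erase hy))
      (by rw [← hsum, (hperm.map f).sum_eq, List.map_cons, List.sum_cons, add_assoc])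
      (by rw [List.length_erase_of_mem hx, hn, Nat.add_sub_cancel])
    refine ⟨x :: l', (hl'.cons x).trans hperm.symm, fun t => ?_⟩
    cases t with
    | zero => simpa using hP
    | succ t => simpa [add_assoc] using hbound t

theorem exists_perm_abs_sum_take_sub_le [Fintype ι] [DecidableEq ι] {a b : ι → α} {M : α}
    (hM : 0 ≤ M) (hab : ∀ j, |a j - b j| ≤ M) (hsum : ∑ j, a j = ∑ j, b j) :
    ∃ l : List ι, l.Perm univ.toList ∧
      ∀ t, |((l.map a).take t).sum - ((l.map b).take t).sum| ≤ M := by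
  obtain ⟨l, hperm, hbal⟩ := exists_perm_abs_add_sum_take_le (fun j => a j - b j) univ.toList
    (P := 0) (by simpa using hM) (fun j _ => hab j)
    (by rw [zero_add, sum_map_toList, sum_sub_distrib, hsum, sub_self])
  refine ⟨l, hperm, fun t => ?_⟩
  simpa only [← List.map_take, ← List.sum_map_sub, zero_add] using hbal t

theorem Monotone.sum_sub_le {F : ℕ → α} (hF : Monotone F) (T : Finset ℕ) {lo hi : α}
    (hlohi : lo ≤ hi) (hT : ∀ t ∈ T, lo ≤ F t ∧ F (t + 1) ≤ hi) :
    ∑ t ∈ T, (F (t + 1) - F t) ≤ hi - lo := by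
  induction T using Finset.induction_on_max generalizing hi with
  | empty => simpa using hlohi
  | insert m T hlt ih =>
    have hm := hT m (mem_insert_self m T)
    have hrest : ∑ t ∈ T, (F (t + 1) - F t) ≤ F m - lo :=
      ih hm.1 fun t ht => ⟨(hT t (mem_insert_of_mem ht)).1, hF (hlt t ht)⟩
    rw [sum_insert fun hmT => (hlt m hmT).false]
    calc F (m + 1) - F m + ∑ t ∈ T, (F (t + 1) - F t)
        ≤ F (m + 1) - F m + (F m - lo) := add_le_add_right hrest _
      _ = F (m + 1) - lo := by abel
      _ ≤ hi - lo := sub_le_sub_right hm.2 lo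

theorem monotone_sum_take_of_nonneg {L : List α} (hL : ∀ x ∈ L, 0 ≤ x) :
    Monotone fun t => (L.take t).sum :=
  fun _ _ hst => (List.take_sublist_take_left hst).sum_le_sum fun x hx =>
    hL x (List.mem_of_mem_take hx)

theorem sum_le_sub_of_sum_take_idxOf_bounds [DecidableEq ι] {c : ι → α} (hc : 0 ≤ c)
    {l : List ι} {s : Finset ι} (hs : ∀ j ∈ s, j ∈ l) {lo hi : α} (hlohi : lo ≤ hi)
    (h : ∀ j ∈ s, lo ≤ ((l.map c).take (l.idxOf j)).sum ∧
      ((l.map c).take (l.idxOf j + 1)).sum ≤ hi) :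
    ∑ j ∈ s, c j ≤ hi - lo := by
  set F : ℕ → α := fun t => ((l.map c).take t).sum
  have hF : Monotone F := monotone_sum_take_of_nonneg (by simpa using fun j _ => hc j)
  have hinj : Set.InjOn l.idxOf s := fun x hx y _ hxy => (List.idxOf_inj (hs x hx)).1 hxy
  calc ∑ j ∈ s, c j = ∑ t ∈ s.image l.idxOf, (F (t + 1) - F t) := by
        rw [sum_image hinj]
        exact sum_congr rfl fun j hj => by
          simp only [F, sum_take_idxOf_succ c (hs j hj), add_sub_cancel_left]
    _ ≤ hi - lo := hF.sum_sub_le _ hlohi (by simpa only [forall_mem_image] using h)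

theorem exists_lt_le_and_le_add {N : ℕ → α} {k : ℕ} (hk : 0 < k) {x y M : α} (hM : 0 ≤ M)
    (hx : N 0 ≤ x) (hyx : y ≤ x + M) (hyk : y ≤ N k) :
    ∃ i < k, N i ≤ x ∧ y ≤ N (i + 1) + M := by
  classical
  set i := Nat.findGreatest (fun m => N m ≤ x) (k - 1)
  have hik : i ≤ k - 1 := Nat.findGreatest_le _
  refine ⟨i, by omega, Nat.findGreatest_spec (P := fun m => N m ≤ x) (Nat.zero_le _) hx, ?_⟩
  rcases lt_or_ge i (k - 1) with hlt | hge
  · have : x < N (i + 1) :=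
      not_le.1 (Nat.findGreatest_is_greatest (k := i + 1) (Nat.lt_succ_self i) (by omega))
    exact hyx.trans (add_le_add_left this.le M)
  · rw [show i + 1 = k by omega]
    exact hyk.trans (le_add_of_nonneg_right hM)

theorem exists_assignment_sum_le [Fintype ι] {k : ℕ} (hk : 0 < k) {n : Fin k → α} (hn : 0 ≤ n)
    {a b : ι → α} (ha : 0 ≤ a) (hb : 0 ≤ b) {M : α} (hM : 0 ≤ M) (hab : ∀ j, a j + b j ≤ M)
    (hsa : ∑ j, a j = ∑ i, n i) (hsb : ∑ j, b j = ∑ i, n i) :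
    ∃ φ : ι → Fin k, ∀ i, ∑ j with φ j = i, a j ≤ n i + M ∧
      ∑ j with φ j = i, b j ≤ n i + 3 • M := by
  classical
  have ha_le j : a j ≤ M := (le_add_of_nonneg_right (hb j)).trans (hab j)
  have hb_le j : b j ≤ M := (le_add_of_nonneg_left (ha j)).trans (hab j)
  obtain ⟨l, hperm, hAB⟩ := exists_perm_abs_sum_take_sub_le hM
    (fun j => abs_sub_le_of_nonneg_of_le (ha j) (ha_le j) (hb j) (hb_le j)) (hsa.trans hsb.symm)
  have hl j : j ∈ l := hperm.mem_iff.2 (mem_toList.2 (mem_univ j))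
  set A : ℕ → α := fun t => ((l.map a).take t).sum
  set B : ℕ → α := fun t => ((l.map b).take t).sum
  have hal : ∀ x ∈ l.map a, 0 ≤ x := by
    simp only [List.mem_map]; rintro _ ⟨j, -, rfl⟩; exact ha j
  have hA_le t : A t ≤ sumBelow n k := calc
    A t ≤ (l.map a).sum := (List.take_sublist _ _).sum_le_sum hal
    _ = sumBelow n k := by rw [(hperm.map a).sum_eq, sum_map_toList, hsa, sumBelow_self]
  have hcut j : ∃ i : Fin k,
      sumBelow n i ≤ A (l.idxOf j) ∧ A (l.idxOf j + 1) ≤ sumBelow n (i + 1) + M := by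
    obtain ⟨i, hik, hi⟩ := exists_lt_le_and_le_add hk hM
      (by simpa using List.sum_nonneg fun x hx => hal x (List.mem_of_mem_take hx))
      (x := A (l.idxOf j)) (y := A (l.idxOf j + 1))
      (by simpa only [A, sum_take_idxOf_succ a (hl j)] using add_le_add_right (ha_le j) _)
      (hA_le _)
    exact ⟨⟨i, hik⟩, hi⟩
  choose φ hφa using hcut
  have hφb j : sumBelow n (φ j) - M ≤ B (l.idxOf j) ∧
      B (l.idxOf j + 1) ≤ sumBelow n (φ j + 1) + M + M :=
    ⟨(sub_le_sub_right (hφa j).1 M).trans (sub_le_comm.1 (abs_sub_le_iff.1 (hAB _)).1),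
      (sub_le_iff_le_add'.1 (abs_sub_le_iff.1 (hAB _)).2).trans (add_le_add_left (hφa j).2 M)⟩
  refine ⟨φ, fun i => ⟨?_, ?_⟩⟩
  · calc ∑ j with φ j = i, a j ≤ sumBelow n (i + 1) + M - sumBelow n i := by
          refine sum_le_sub_of_sum_take_idxOf_bounds ha (fun j _ => hl j) ?_ fun j hj => ?_
          · rw [sumBelow_succ, add_assoc]; exact le_add_of_nonneg_right (add_nonneg (hn i) hM)
          · obtain rfl := (mem_filter.1 hj).2; exact hφa j
      _ = n i + M := by rw [sumBelow_succ]; abel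
  · calc ∑ j with φ j = i, b j ≤ sumBelow n (i + 1) + M + M - (sumBelow n i - M) := by
          refine sum_le_sub_of_sum_take_idxOf_bounds hb (fun j _ => hl j) ?_ fun j hj => ?_
          · rw [sumBelow_succ, add_assoc, add_assoc]
            exact (sub_le_self _ hM).trans
              (le_add_of_nonneg_right (add_nonneg (hn i) (add_nonneg hM hM)))
          · obtain rfl := (mem_filter.1 hj).2; exact hφb j
      _ = n i + 3 • M := by rw [sumBelow_succ]; abel

end OrderedGroup

theorem stmt_4_general (ξ : ℝ) (hξ0 : 0 < ξ) (k : ℕ) (hk : 0 < k) :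
    ∃ ℓ : ℕ, 0 < ℓ ∧ ∀ n : ℕ, ℓ ≤ n →
      ∀ (ni : Fin k → ℕ) (a b : Fin ℓ → ℕ),
        (∑ i, ni i = n) → (∑ j, a j = n) → (∑ j, b j = n) →
        (∀ i, (ni i : ℝ) ≤ (n : ℝ) / 8) →
        (∀ j, ((a j : ℝ) + (b j : ℝ)) ≤ (1 + ξ) * (2 * (n : ℝ) / ℓ)) →
        ∃ φ : Fin ℓ → Fin k, ∀ i : Fin k,
          ((∑ j ∈ Finset.univ.filter (fun j => φ j = i), a j : ℕ) : ℝ) < (ni i : ℝ) + ξ * n ∧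
          ((∑ j ∈ Finset.univ.filter (fun j => φ j = i), b j : ℕ) : ℝ) < (ni i : ℝ) + ξ * n := by
  obtain ⟨ℓ, hℓ⟩ := exists_nat_gt (6 * (1 + ξ) / ξ)
  have hℓ0 : (0 : ℝ) < ℓ := (by positivity : (0 : ℝ) < 6 * (1 + ξ) / ξ).trans hℓ
  refine ⟨ℓ, by exact_mod_cast hℓ0, fun n hn ni a b hni ha hb _ hab => ?_⟩
  set M := (1 + ξ) * (2 * (n : ℝ) / ℓ)
  have hM : 0 ≤ M := by positivity
  have hMξ : 3 * M < ξ * n := by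
    have hn0 : (0 : ℝ) < n := hℓ0.trans_le (by exact_mod_cast hn)
    have : 6 * (1 + ξ) < ξ * ℓ := (div_lt_iff₀' hξ0).1 hℓ
    calc 3 * M = 6 * (1 + ξ) * n / ℓ := by ring
      _ < ξ * n := by rw [div_lt_iff₀ hℓ0]; nlinarith
  obtain ⟨φ, hφ⟩ := exists_assignment_sum_le hk (n := fun i => (ni i : ℝ))
    (a := fun j => (a j : ℝ)) (b := fun j => (b j : ℝ)) (fun i => Nat.cast_nonneg _)
    (fun j => Nat.cast_nonneg _) (fun j => Nat.cast_nonneg _) hM hab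
    (by exact_mod_cast ha.trans hni.symm) (by exact_mod_cast hb.trans hni.symm)
  refine ⟨φ, fun i => ⟨?_, ?_⟩⟩
  · push_cast; linarith [(hφ i).1]
  · have hφb := (hφ i).2
    rw [nsmul_eq_mul, Nat.cast_ofNat] at hφb
    push_cast; linarith

theorem stmt_4 (ξ : ℝ) (hξ0 : 0 < ξ) (hξ : ξ ≤ 1 / 4) (k : ℕ) (hk : 0 < k) :
    ∃ ℓ : ℕ, 0 < ℓ ∧ ∀ n : ℕ, ℓ ≤ n →
      ∀ (ni : Fin k → ℕ) (a b : Fin ℓ → ℕ),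
        (∑ i, ni i = n) → (∑ j, a j = n) → (∑ j, b j = n) →
        (∀ i, (ni i : ℝ) ≤ (n : ℝ) / 8) →
        (∀ j, ((a j : ℝ) + (b j : ℝ)) ≤ (1 + ξ) * (2 * (n : ℝ) / ℓ)) →
        ∃ φ : Fin ℓ → Fin k, ∀ i : Fin k,
          ((∑ j ∈ Finset.univ.filter (fun j => φ j = i), a j : ℕ) : ℝ) < (ni i : ℝ) + ξ * n ∧
          ((∑ j ∈ Finset.univ.filter (fun j => φ j = i), b j : ℕ) : ℝ) < (ni i : ℝ) + ξ * n :=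
  stmt_4_general ξ hξ0 k hk
end

section
/- Let k ≥ 1 be an integer, 0 < ξ ≤ 1/(20k²), and let G = (A ∪ B, E) be a balanced bipartite graph on 2n vertices with partitions A = A'₁ ∪ ⋯ ∪ A'_k and B = B'₁ ∪ ⋯ ∪ B'_k such that |A'_i|, |B'_i| ≥ n/(2k), each pair (A'_i, B'_i) is (ε', d')-super-regular, and each pair (A'_i, B'_{i+1}) (indices mod k) is (ε', d')-regular. Let (a'_i)_{i∈[k]} and (b'_i)_{i∈[k]} be integers with a'_i, b'_i ≤ ξn for all i and Σ a'_i = Σ b'_i = 0. Then there exist partitions A = A₁ ∪ ⋯ ∪ A_k and B = B₁ ∪ ⋯ ∪ B_k with |A_i| = |A'_i| + a'_i and |B_i| = |B'_i| + b'_i such that (A_i, B_i) is (ε, d)-super-regular and (A_i, B_{i+1}) is (ε, d)-regular for all i ∈ [k], where ε = ε' + 100k√ξ and d = d' − 100k²√ξ − ε'. -/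
open Finset

/-- The density of a pair of vertex sets: number of edges between `U` and `W`
divided by `|U||W|`. -/
noncomputable def density {V : Type*} [DecidableEq V] (G : SimpleGraph V) [DecidableRel G.Adj]
    (U W : Finset V) : ℝ :=
  (((U ×ˢ W).filter (fun p => G.Adj p.1 p.2)).card : ℝ) / ((U.card : ℝ) * (W.card : ℝ))

/-- `(U, W)` is an `(ε, d)`-regular pair: density at least `d`, and all large subpairs
have density within `ε` of `d(U,W)`. -/
noncomputable def IsRegularPair {V : Type*} [DecidableEq V] (G : SimpleGraph V)
    [DecidableRel G.Adj] (ε d : ℝ) (U W : Finset V) : Prop :=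
  d ≤ density G U W ∧
    ∀ U' ⊆ U, ∀ W' ⊆ W, ε * U.card ≤ U'.card → ε * W.card ≤ W'.card →
      |density G U' W' - density G U W| ≤ ε

/-- An `(ε, d)`-regular pair `(U, W)` is `(ε, d)`-super-regular if every vertex of `U` has at
least `d|W|` neighbours in `W` and every vertex of `W` has at least `d|U|` neighbours in `U`. -/
noncomputable def IsSuperRegularPair {V : Type*} [DecidableEq V] (G : SimpleGraph V)
    [DecidableRel G.Adj] (ε d : ℝ) (U W : Finset V) : Prop :=
  IsRegularPair G ε d U W ∧
    (∀ u ∈ U, d * W.card ≤ ((W.filter (fun w => G.Adj u w)).card : ℝ)) ∧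
    (∀ w ∈ W, d * U.card ≤ ((U.filter (fun u => G.Adj u w)).card : ℝ))

set_option linter.unusedSectionVars false
set_option linter.unusedVariables false

lemma abs_div_sub_div_le (x y p q a b M D : ℝ)
    (hp : 0 < p) (hq : 0 < q) (ha0 : 0 ≤ a) (hb0 : 0 ≤ b)
    (hx0 : 0 ≤ x) (hxy : x ≤ y) (hx1 : x ≤ p*q)
    (hy : y ≤ x + a*(q+b) + (p+a)*b)
    (haM : a ≤ M) (hbM : b ≤ M) (hMD : M ≤ D) (hDp : D ≤ p) (hDq : D ≤ q) (hD : 0 < D) :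
    |y/((p+a)*(q+b)) - x/(p*q)| ≤ 4*M/D := by
  set S : ℝ := a*q + b*p + 2*(a*b) with hS
  have hpq : (0:ℝ) < p*q := mul_pos hp hq
  have hbig : (0:ℝ) < (p+a)*(q+b) := by nlinarith
  have hle : p*q ≤ (p+a)*(q+b) := by nlinarith
  have hy0 : (0:ℝ) ≤ y := le_trans hx0 hxy
  have hyS : y ≤ x + S := by nlinarith
  have hST : S/(p*q) ≤ 4*M/D := by
    rw [div_le_div_iff₀ hpq hD]
    have hM0 : 0 ≤ M := le_trans ha0 haM
    have e1 : a*q*D ≤ M*(p*q) := by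
      calc a*q*D ≤ M*q*D := by
            apply mul_le_mul_of_nonneg_right (mul_le_mul_of_nonneg_right haM hq.le) hD.le
        _ ≤ M*q*p := by
            apply mul_le_mul_of_nonneg_left hDp (mul_nonneg hM0 hq.le)
        _ = M*(p*q) := by ring
    have e2 : b*p*D ≤ M*(p*q) := by
      calc b*p*D ≤ M*p*D := by
            apply mul_le_mul_of_nonneg_right (mul_le_mul_of_nonneg_right hbM hp.le) hD.le
        _ ≤ M*p*q := by
            apply mul_le_mul_of_nonneg_left hDq (mul_nonneg hM0 hp.le)
        _ = M*(p*q) := by ring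
    have e3 : a*b*D ≤ M*(p*q) := by
      have hbD : b ≤ D := le_trans hbM hMD
      calc a*b*D ≤ M*b*D := by
            apply mul_le_mul_of_nonneg_right (mul_le_mul_of_nonneg_right haM hb0) hD.le
        _ ≤ M*D*D := by
            apply mul_le_mul_of_nonneg_right (mul_le_mul_of_nonneg_left hbD hM0) hD.le
        _ ≤ M*q*D := by
            apply mul_le_mul_of_nonneg_right (mul_le_mul_of_nonneg_left hDq hM0) hD.le
        _ ≤ M*q*p := by
            apply mul_le_mul_of_nonneg_left hDp (mul_nonneg hM0 hq.le)
        _ = M*(p*q) := by ring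
    nlinarith [e1, e2, e3]
  have main : |y/((p+a)*(q+b)) - x/(p*q)| ≤ S/(p*q) := by
    rw [abs_sub_le_iff]
    constructor
    · have h1 : y/((p+a)*(q+b)) ≤ y/(p*q) := by gcongr
      have h2 : y/(p*q) ≤ (x+S)/(p*q) := by gcongr
      rw [add_div] at h2
      linarith
    · have lo : (x - S)/(p*q) ≤ y/((p+a)*(q+b)) := by
        rw [div_le_div_iff₀ hpq hbig]
        have hT0 : (0:ℝ) ≤ a*q + b*p + a*b := by positivity
        have l1 : x*(p*q) ≤ y*(p*q) := mul_le_mul_of_nonneg_right hxy hpq.le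
        have l2 : x*(a*q + b*p + a*b) ≤ (p*q)*(a*q + b*p + a*b) :=
          mul_le_mul_of_nonneg_right hx1 hT0
        have l3 : (p*q)*(a*q+b*p+a*b) ≤ ((p+a)*(q+b))*S := by
          have hSS : a*q+b*p+a*b ≤ S := by nlinarith
          exact mul_le_mul hle hSS hT0 hbig.le
        nlinarith [l1, l2, l3]
      have : (x - S)/(p*q) = x/(p*q) - S/(p*q) := sub_div x S (p*q)
      linarith [lo, this]
  linarith [main, hST]


section helpers
variable {V : Type*} [DecidableEq V] (G : SimpleGraph V) [DecidableRel G.Adj]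

lemma density_nonneg (U W : Finset V) : 0 ≤ density G U W := by
  unfold density; positivity

lemma density_le_one (U W : Finset V) : density G U W ≤ 1 := by
  unfold density
  rcases ((mul_nonneg (Nat.cast_nonneg U.card) (Nat.cast_nonneg W.card)) : (0:ℝ) ≤ (U.card : ℝ) * W.card).eq_or_lt with h | h
  · rw [← h, div_zero]; norm_num
  · rw [div_le_one h]
    calc (((U ×ˢ W).filter (fun p => G.Adj p.1 p.2)).card : ℝ) ≤ ((U ×ˢ W).card : ℝ) := by
          exact_mod_cast Finset.card_le_card (Finset.filter_subset _ _)
      _ = (U.card : ℝ) * W.card := by rw [Finset.card_product]; push_cast; ring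

lemma edge_le (U W : Finset V) :
    (((U ×ˢ W).filter (fun p => G.Adj p.1 p.2)).card : ℝ) ≤ (U.card : ℝ) * W.card := by
  calc (((U ×ˢ W).filter (fun p => G.Adj p.1 p.2)).card : ℝ) ≤ ((U ×ˢ W).card : ℝ) := by
        exact_mod_cast Finset.card_le_card (Finset.filter_subset _ _)
    _ = (U.card : ℝ) * W.card := by rw [Finset.card_product]; push_cast; ring

lemma edge_sum_left (U W : Finset V) :
    ((U ×ˢ W).filter (fun p => G.Adj p.1 p.2)).card
      = ∑ u ∈ U, (W.filter (fun w => G.Adj u w)).card := by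
  rw [Finset.card_filter, Finset.sum_product]
  refine Finset.sum_congr rfl fun u _ => ?_
  rw [Finset.card_filter]

lemma edge_sum_right (U W : Finset V) :
    ((U ×ˢ W).filter (fun p => G.Adj p.1 p.2)).card
      = ∑ w ∈ W, (U.filter (fun u => G.Adj u w)).card := by
  rw [Finset.card_filter, Finset.sum_product_right]
  refine Finset.sum_congr rfl fun w _ => ?_
  rw [Finset.card_filter]

lemma edge_mono {U' W' U'' W'' : Finset V} (hU : U'' ⊆ U') (hW : W'' ⊆ W') :
    ((U'' ×ˢ W'').filter (fun p => G.Adj p.1 p.2)).card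
      ≤ ((U' ×ˢ W').filter (fun p => G.Adj p.1 p.2)).card :=
  Finset.card_le_card (Finset.filter_subset_filter _ (Finset.product_subset_product hU hW))

lemma edge_upper {U' W' U'' W'' : Finset V} (hU : U'' ⊆ U') (hW : W'' ⊆ W') :
    ((U' ×ˢ W').filter (fun p => G.Adj p.1 p.2)).card
      ≤ ((U'' ×ˢ W'').filter (fun p => G.Adj p.1 p.2)).card
        + (U' \ U'').card * W'.card + U'.card * (W' \ W'').card := by
  have hsub : (U' ×ˢ W').filter (fun p => G.Adj p.1 p.2)
      ⊆ ((U'' ×ˢ W'').filter (fun p => G.Adj p.1 p.2)) ∪ ((U' \ U'') ×ˢ W') ∪ (U' ×ˢ (W' \ W'')) := by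
    intro p hp
    simp only [Finset.mem_filter, Finset.mem_product] at hp
    by_cases h1 : p.1 ∈ U''
    · by_cases h2 : p.2 ∈ W''
      · exact Finset.mem_union_left _ (Finset.mem_union_left _ (by
          simp [Finset.mem_filter, Finset.mem_product, h1, h2, hp.2]))
      · exact Finset.mem_union_right _ (by
          simp [Finset.mem_product, hp.1.1, hp.1.2, h2])
    · exact Finset.mem_union_left _ (Finset.mem_union_right _ (by
        simp [Finset.mem_product, hp.1.1, hp.1.2, h1]))
  calc ((U' ×ˢ W').filter (fun p => G.Adj p.1 p.2)).card
      ≤ (((U'' ×ˢ W'').filter (fun p => G.Adj p.1 p.2)) ∪ ((U' \ U'') ×ˢ W') ∪ (U' ×ˢ (W' \ W''))).card :=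
        Finset.card_le_card hsub
    _ ≤ _ := by
        refine le_trans (Finset.card_union_le _ _) ?_
        gcongr
        refine le_trans (Finset.card_union_le _ _) ?_
        gcongr
        · exact le_of_eq (Finset.card_product _ _)
        · exact le_of_eq (Finset.card_product _ _)

end helpers

section main
variable {V : Type*} [DecidableEq V] (G : SimpleGraph V) [DecidableRel G.Adj]

/-- Perturbation bound for densities of nested pairs. -/
lemma density_diff_le {U' W' U'' W'' : Finset V} (hU : U'' ⊆ U') (hW : W'' ⊆ W')
    (M D : ℝ) (hD : 0 < D) (hMD : M ≤ D)
    (ha : ((U' \ U'').card : ℝ) ≤ M) (hb : ((W' \ W'').card : ℝ) ≤ M)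
    (hU0 : D ≤ (U''.card : ℝ)) (hW0 : D ≤ (W''.card : ℝ)) :
    |density G U' W' - density G U'' W''| ≤ 4 * M / D := by
  have hpa : (U'.card : ℝ) = (U''.card : ℝ) + ((U' \ U'').card : ℝ) := by
    have := Finset.card_sdiff_add_card_eq_card hU
    push_cast [← this]; ring
  have hqb : (W'.card : ℝ) = (W''.card : ℝ) + ((W' \ W'').card : ℝ) := by
    have := Finset.card_sdiff_add_card_eq_card hW
    push_cast [← this]; ring
  have hres := abs_div_sub_div_le
    (((U'' ×ˢ W'').filter (fun p => G.Adj p.1 p.2)).card : ℝ)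
    (((U' ×ˢ W').filter (fun p => G.Adj p.1 p.2)).card : ℝ)
    (U''.card : ℝ) (W''.card : ℝ) ((U' \ U'').card : ℝ) ((W' \ W'').card : ℝ) M D
    (lt_of_lt_of_le hD hU0) (lt_of_lt_of_le hD hW0)
    (Nat.cast_nonneg _) (Nat.cast_nonneg _) (Nat.cast_nonneg _)
    (by exact_mod_cast edge_mono G hU hW)
    (edge_le G U'' W'')
    (by
      have := edge_upper G hU hW
      have h2 : (((U' ×ˢ W').filter (fun p => G.Adj p.1 p.2)).card : ℝ)
          ≤ (((U'' ×ˢ W'').filter (fun p => G.Adj p.1 p.2)).card : ℝ)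
            + ((U' \ U'').card : ℝ) * (W'.card : ℝ) + (U'.card : ℝ) * ((W' \ W'').card : ℝ) := by
        exact_mod_cast this
      rw [hpa, hqb] at h2
      linarith)
    ha hb hMD hU0 hW0 hD
  unfold density
  rw [hpa, hqb]
  exact hres

/-- Most vertices of `U` have large degree into `W`. -/
lemma good_count_left {ε d : ℝ} {U W : Finset V} (hreg : IsRegularPair G ε d U W)
    (hε0 : 0 ≤ ε) (hε1 : ε ≤ 1) :
    (1 - ε) * (U.card : ℝ) ≤
      (((U.filter (fun u => (density G U W - ε) * (W.card : ℝ)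
        ≤ ((W.filter (fun w => G.Adj u w)).card : ℝ))).card : ℝ)) := by
  set P := fun u => (density G U W - ε) * (W.card : ℝ) ≤ ((W.filter (fun w => G.Adj u w)).card : ℝ)
  have hsplit : (U.filter P).card + (U.filter (fun u => ¬ P u)).card = U.card :=
    Finset.card_filter_add_card_filter_not P
  have hbad : ((U.filter (fun u => ¬ P u)).card : ℝ) ≤ ε * U.card := by
    by_contra hcon
    push_neg at hcon
    set Bad := U.filter (fun u => ¬ P u) with hBad
    have hBadne : Bad.Nonempty := by
      rw [Finset.nonempty_iff_ne_empty]
      intro h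
      rw [h] at hcon; simp at hcon
      nlinarith [hcon, mul_nonneg hε0 (Nat.cast_nonneg U.card)]
    have hWpos : (0:ℝ) < (W.card : ℝ) := by
      by_contra hW
      push_neg at hW
      have hW0 : (W.card : ℝ) = 0 := le_antisymm hW (Nat.cast_nonneg _)
      obtain ⟨u, hu⟩ := hBadne
      rw [hBad, Finset.mem_filter] at hu
      refine hu.2 ?_
      simp only [P]
      rw [hW0, mul_zero]
      positivity
    have hsub := hreg.2 Bad (Finset.filter_subset _ _) W (le_refl _)
      (le_of_lt hcon)
      (by nlinarith [mul_le_mul_of_nonneg_right hε1 hWpos.le])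
    -- edge count strictly small
    have hBadpos : (0:ℝ) < (Bad.card : ℝ) := by
      exact_mod_cast Finset.card_pos.mpr hBadne
    have hecount : (((Bad ×ˢ W).filter (fun p => G.Adj p.1 p.2)).card : ℝ)
        < (Bad.card : ℝ) * ((density G U W - ε) * (W.card : ℝ)) := by
      rw [edge_sum_left]
      push_cast
      have := Finset.sum_lt_sum_of_nonempty hBadne
        (f := fun u => (((W.filter (fun w => G.Adj u w)).card : ℕ) : ℝ))
        (g := fun _ => (density G U W - ε) * (W.card : ℝ))
        (by
          intro u hu
          rw [hBad, Finset.mem_filter] at hu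
          exact lt_of_not_ge hu.2)
      simpa [Finset.sum_const, nsmul_eq_mul, mul_comm] using this
    have hdlt : density G Bad W < density G U W - ε := by
      unfold density
      rw [div_lt_iff₀ (by positivity)]
      calc (((Bad ×ˢ W).filter (fun p => G.Adj p.1 p.2)).card : ℝ)
          < (Bad.card : ℝ) * ((density G U W - ε) * (W.card : ℝ)) := hecount
        _ = (density G U W - ε) * ((Bad.card : ℝ) * (W.card : ℝ)) := by ring
    have := abs_le.mp hsub
    linarith [this.1]
  have : ((U.filter P).card : ℝ) = (U.card : ℝ) - ((U.filter (fun u => ¬ P u)).card : ℝ) := by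
    push_cast [← hsplit]; ring
  rw [this]
  nlinarith [hbad]

lemma good_count_right {ε d : ℝ} {U W : Finset V} (hreg : IsRegularPair G ε d U W)
    (hε0 : 0 ≤ ε) (hε1 : ε ≤ 1) :
    (1 - ε) * (W.card : ℝ) ≤
      (((W.filter (fun w => (density G U W - ε) * (U.card : ℝ)
        ≤ ((U.filter (fun u => G.Adj u w)).card : ℝ))).card : ℝ)) := by
  set P := fun w => (density G U W - ε) * (U.card : ℝ) ≤ ((U.filter (fun u => G.Adj u w)).card : ℝ)
  have hsplit : (W.filter P).card + (W.filter (fun w => ¬ P w)).card = W.card :=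
    Finset.card_filter_add_card_filter_not P
  have hbad : ((W.filter (fun w => ¬ P w)).card : ℝ) ≤ ε * W.card := by
    by_contra hcon
    push_neg at hcon
    set Bad := W.filter (fun w => ¬ P w) with hBad
    have hBadne : Bad.Nonempty := by
      rw [Finset.nonempty_iff_ne_empty]
      intro h
      rw [h] at hcon; simp at hcon
      nlinarith [hcon, mul_nonneg hε0 (Nat.cast_nonneg W.card)]
    have hUpos : (0:ℝ) < (U.card : ℝ) := by
      by_contra hU
      push_neg at hU
      have hU0 : (U.card : ℝ) = 0 := le_antisymm hU (Nat.cast_nonneg _)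
      obtain ⟨w, hw⟩ := hBadne
      rw [hBad, Finset.mem_filter] at hw
      refine hw.2 ?_
      simp only [P]
      rw [hU0, mul_zero]
      positivity
    have hsub := hreg.2 U (le_refl _) Bad (Finset.filter_subset _ _)
      (by nlinarith [mul_le_mul_of_nonneg_right hε1 hUpos.le])
      (le_of_lt hcon)
    have hBadpos : (0:ℝ) < (Bad.card : ℝ) := by
      exact_mod_cast Finset.card_pos.mpr hBadne
    have hecount : (((U ×ˢ Bad).filter (fun p => G.Adj p.1 p.2)).card : ℝ)
        < (Bad.card : ℝ) * ((density G U W - ε) * (U.card : ℝ)) := by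
      rw [edge_sum_right]
      push_cast
      have := Finset.sum_lt_sum_of_nonempty hBadne
        (f := fun w => (((U.filter (fun u => G.Adj u w)).card : ℕ) : ℝ))
        (g := fun _ => (density G U W - ε) * (U.card : ℝ))
        (by
          intro w hw
          rw [hBad, Finset.mem_filter] at hw
          exact lt_of_not_ge hw.2)
      simpa [Finset.sum_const, nsmul_eq_mul, mul_comm] using this
    have hdlt : density G U Bad < density G U W - ε := by
      unfold density
      rw [div_lt_iff₀ (by positivity)]
      calc (((U ×ˢ Bad).filter (fun p => G.Adj p.1 p.2)).card : ℝ)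
          < (Bad.card : ℝ) * ((density G U W - ε) * (U.card : ℝ)) := hecount
        _ = (density G U W - ε) * ((U.card : ℝ) * (Bad.card : ℝ)) := by ring
    have := abs_le.mp hsub
    linarith [this.1]
  have : ((W.filter P).card : ℝ) = (W.card : ℝ) - ((W.filter (fun w => ¬ P w)).card : ℝ) := by
    push_cast [← hsplit]; ring
  rw [this]
  nlinarith [hbad]

lemma filter_card_pert (P : V → Prop) [DecidablePred P] (W W₁ : Finset V) :
    (W.filter P).card ≤ (W₁.filter P).card + (W \ W₁).card := by
  have hsub : W.filter P ⊆ W₁.filter P ∪ (W \ W₁) := by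
    intro w hw
    rw [Finset.mem_filter] at hw
    by_cases h : w ∈ W₁
    · exact Finset.mem_union_left _ (Finset.mem_filter.mpr ⟨h, hw.2⟩)
    · exact Finset.mem_union_right _ (Finset.mem_sdiff.mpr ⟨hw.1, h⟩)
  exact le_trans (Finset.card_le_card hsub) (Finset.card_union_le _ _)


lemma trivial_super {ε d : ℝ} (hε : 1 ≤ ε) (hd : d ≤ 0) (U W : Finset V) :
    IsSuperRegularPair G ε d U W := by
  refine ⟨⟨le_trans hd (density_nonneg G U W), ?_⟩, ?_, ?_⟩
  · intro U' hU' W' hW' hcU hcW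
    have hU'eq : U' = U := by
      apply Finset.eq_of_subset_of_card_le hU'
      have h1 : (U.card : ℝ) ≤ (U'.card : ℝ) := by
        calc (U.card : ℝ) = 1 * U.card := (one_mul _).symm
          _ ≤ ε * U.card := mul_le_mul_of_nonneg_right hε (Nat.cast_nonneg _)
          _ ≤ (U'.card : ℝ) := hcU
      exact_mod_cast h1
    have hW'eq : W' = W := by
      apply Finset.eq_of_subset_of_card_le hW'
      have h1 : (W.card : ℝ) ≤ (W'.card : ℝ) := by
        calc (W.card : ℝ) = 1 * W.card := (one_mul _).symm
          _ ≤ ε * W.card := mul_le_mul_of_nonneg_right hε (Nat.cast_nonneg _)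
          _ ≤ (W'.card : ℝ) := hcW
      exact_mod_cast h1
    rw [hU'eq, hW'eq, sub_self, abs_zero]
    linarith
  · intro u _
    have : d * (W.card : ℝ) ≤ 0 := mul_nonpos_of_nonpos_of_nonneg hd (Nat.cast_nonneg _)
    exact le_trans this (Nat.cast_nonneg _)
  · intro w _
    have : d * (U.card : ℝ) ≤ 0 := mul_nonpos_of_nonpos_of_nonneg hd (Nat.cast_nonneg _)
    exact le_trans this (Nat.cast_nonneg _)

lemma mono_regular {ε d ε₂ d₂ : ℝ} {U W : Finset V} (h : IsRegularPair G ε d U W)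
    (hε0 : 0 ≤ ε) (hε : ε ≤ ε₂) (hd : d₂ ≤ d) : IsRegularPair G ε₂ d₂ U W := by
  refine ⟨le_trans hd h.1, ?_⟩
  intro U' hU' W' hW' hcU hcW
  have h1 := h.2 U' hU' W' hW'
    (le_trans (mul_le_mul_of_nonneg_right hε (Nat.cast_nonneg _)) hcU)
    (le_trans (mul_le_mul_of_nonneg_right hε (Nat.cast_nonneg _)) hcW)
  linarith [h1]

lemma mono_super {ε d ε₂ d₂ : ℝ} {U W : Finset V} (h : IsSuperRegularPair G ε d U W)
    (hε0 : 0 ≤ ε) (hε : ε ≤ ε₂) (hd : d₂ ≤ d) : IsSuperRegularPair G ε₂ d₂ U W := by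
  refine ⟨mono_regular G h.1 hε0 hε hd, ?_, ?_⟩
  · intro u hu
    exact le_trans (mul_le_mul_of_nonneg_right hd (Nat.cast_nonneg _)) (h.2.1 u hu)
  · intro w hw
    exact le_trans (mul_le_mul_of_nonneg_right hd (Nat.cast_nonneg _)) (h.2.2 w hw)

/-- Partition a finset into parts of prescribed sizes. -/
lemma exists_partition : ∀ (k : ℕ) (A : Finset V) (f : Fin k → ℕ), (∑ i, f i) = A.card →
    ∃ P : Fin k → Finset V, Finset.univ.biUnion P = A ∧
      (∀ i j, i ≠ j → Disjoint (P i) (P j)) ∧ ∀ i, (P i).card = f i := by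
  intro k
  induction k with
  | zero =>
    intro A f hf
    refine ⟨fun i => ∅, ?_, ?_, ?_⟩
    · simp at hf ⊢
      exact (Finset.card_eq_zero.mp hf.symm).symm
    · intro i; exact absurd i.isLt (by omega)
    · intro i; exact absurd i.isLt (by omega)
  | succ k ih =>
    intro A f hf
    have h0 : f 0 ≤ A.card := by
      rw [← hf, Fin.sum_univ_succ]
      omega
    obtain ⟨S, hSA, hScard⟩ := Finset.exists_subset_card_eq h0
    have hrest : (∑ i, f (Fin.succ i)) = (A \ S).card := by
      rw [Finset.card_sdiff_of_subset hSA, hScard]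
      rw [Fin.sum_univ_succ] at hf
      omega
    obtain ⟨Q, hQun, hQdisj, hQcard⟩ := ih (A \ S) (fun i => f (Fin.succ i)) hrest
    have hQsub : ∀ i, Q i ⊆ A \ S := by
      intro i
      rw [← hQun]
      exact Finset.subset_biUnion_of_mem Q (Finset.mem_univ i)
    refine ⟨fun i => Fin.cases S Q i, ?_, ?_, ?_⟩
    · ext x
      simp only [Finset.mem_biUnion, Finset.mem_univ, true_and]
      constructor
      · rintro ⟨i, hi⟩
        rcases Fin.eq_zero_or_eq_succ i with rfl | ⟨i', rfl⟩
        · rw [show (Fin.cases S Q (0 : Fin (k+1)) : Finset V) = S from rfl] at hi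
          exact hSA hi
        · rw [Fin.cases_succ] at hi
          exact (Finset.mem_sdiff.mp (hQsub i' hi)).1
      · intro hx
        by_cases hxS : x ∈ S
        · exact ⟨0, by simpa using hxS⟩
        · have : x ∈ A \ S := Finset.mem_sdiff.mpr ⟨hx, hxS⟩
          rw [← hQun] at this
          obtain ⟨i, _, hi⟩ := Finset.mem_biUnion.mp this
          exact ⟨Fin.succ i, by simpa using hi⟩
    · intro i j hij
      rcases Fin.eq_zero_or_eq_succ i with rfl | ⟨i', rfl⟩ <;>
        rcases Fin.eq_zero_or_eq_succ j with rfl | ⟨j', rfl⟩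
      · exact absurd rfl hij
      · simp only [Fin.cases_zero, Fin.cases_succ]
        exact Finset.disjoint_left.mpr (fun x hx hx' =>
          (Finset.mem_sdiff.mp (hQsub j' hx')).2 hx)
      · simp only [Fin.cases_zero, Fin.cases_succ]
        exact Finset.disjoint_left.mpr (fun x hx hx' =>
          (Finset.mem_sdiff.mp (hQsub i' hx)).2 hx')
      · simp only [Fin.cases_succ]
        exact hQdisj i' j' (fun h => hij (by rw [h]))
    · intro i
      rcases Fin.eq_zero_or_eq_succ i with rfl | ⟨i', rfl⟩
      · simpa using hScard
      · simpa using hQcard i'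

end main

lemma exists_move (k : ℕ) (hk : 0 < k) (c : Fin k → ℤ) (x : ℝ) (hx : 0 ≤ x)
    (hc : ∀ i, (c i : ℝ) ≤ x) (hsum : ∑ i, c i = 0) :
    (∃ m : Fin k → ℕ, (∀ i : Fin k, (m i : ℤ) = m (⟨((i:ℕ)+1)%k, Nat.mod_lt _ hk⟩) + c i)
        ∧ ∀ i, (m i : ℝ) ≤ k * x) ∧
    (∃ m : Fin k → ℕ, (∀ i : Fin k, (m (⟨((i:ℕ)+1)%k, Nat.mod_lt _ hk⟩) : ℤ) = m i + c i)
        ∧ ∀ i, (m i : ℝ) ≤ k * x) := by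
  set u : ℕ → ℤ := fun j => ∑ l ∈ Finset.range j, c ⟨l % k, Nat.mod_lt _ hk⟩ with hu
  have hmodeq : ∀ i : Fin k, (⟨(i:ℕ) % k, Nat.mod_lt _ hk⟩ : Fin k) = i := by
    intro i; exact Fin.ext (Nat.mod_eq_of_lt i.isLt)
  have hu0 : u 0 = 0 := by simp [hu]
  have huk : u k = 0 := by
    have e1 : u k = ∑ l ∈ Finset.range k, c ⟨l % k, Nat.mod_lt _ hk⟩ := rfl
    have e2 : ∑ l ∈ Finset.range k, c ⟨l % k, Nat.mod_lt _ hk⟩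
        = ∑ i : Fin k, c ⟨(i:ℕ) % k, Nat.mod_lt _ hk⟩ := Finset.sum_range _
    have e3 : ∑ i : Fin k, c ⟨(i:ℕ) % k, Nat.mod_lt _ hk⟩ = ∑ i : Fin k, c i :=
      Finset.sum_congr rfl fun i _ => congrArg c (hmodeq i)
    rw [e1, e2, e3, hsum]
  have hustep : ∀ j, u (j+1) = u j + c ⟨j % k, Nat.mod_lt _ hk⟩ := by
    intro j; rw [hu]; exact Finset.sum_range_succ _ j
  have haux1 : ∀ p q : ℕ, p ≤ q → (u q : ℝ) - (u p : ℝ) ≤ ((q - p : ℕ) : ℝ) * x := by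
    intro p q hpq
    have hsub : u q - u p = ∑ l ∈ Finset.Ico p q, c ⟨l % k, Nat.mod_lt _ hk⟩ := by
      rw [hu]; rw [Finset.sum_Ico_eq_sub _ hpq]
    have : ((u q - u p : ℤ) : ℝ) = ∑ l ∈ Finset.Ico p q, ((c ⟨l % k, Nat.mod_lt _ hk⟩ : ℤ) : ℝ) := by
      rw [hsub]; push_cast; ring
    have hbound : ∑ l ∈ Finset.Ico p q, ((c ⟨l % k, Nat.mod_lt _ hk⟩ : ℤ) : ℝ)
        ≤ (Finset.Ico p q).card • x := by
      apply Finset.sum_le_card_nsmul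
      intro l _; exact hc _
    rw [Nat.card_Ico, nsmul_eq_mul] at hbound
    push_cast at this ⊢
    linarith [this, hbound]
  have haux2 : ∀ p q : ℕ, p ≤ k → q ≤ k → (u p : ℝ) - (u q : ℝ) ≤ ((k:ℝ)) * x := by
    intro p q hp hq
    rcases le_or_gt p q with h | h
    · have h1 := haux1 0 p (Nat.zero_le _)
      have h2 := haux1 q k hq
      rw [hu0] at h1
      rw [huk] at h2
      have hcast1 : ((p - 0 : ℕ) : ℝ) ≤ (k:ℝ) := by
        simp; exact_mod_cast hp
      have hcast2 : ((k - q : ℕ) : ℝ) ≤ (k:ℝ) := by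
        exact_mod_cast Nat.sub_le k q
      have hpq : ((p - 0 : ℕ) : ℝ) + ((k - q : ℕ) : ℝ) ≤ (k:ℝ) := by
        have : (p - 0) + (k - q) ≤ k := by omega
        exact_mod_cast this
      push_cast at h1 h2 ⊢
      nlinarith [mul_le_mul_of_nonneg_right hpq hx, mul_nonneg (by positivity : (0:ℝ) ≤ ((p - 0:ℕ):ℝ)) hx]
    · have h1 := haux1 q p h.le
      have : ((p - q : ℕ) : ℝ) ≤ (k:ℝ) := by
        exact_mod_cast le_trans (Nat.sub_le p q) hp
      nlinarith [mul_le_mul_of_nonneg_right this hx, h1]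
  have himg : ((Finset.range k).image u).Nonempty :=
    (Finset.nonempty_range_iff.mpr hk.ne').image u
  constructor
  · -- variant 1 : m i = m (succ i) + c i,  via m i = C - u i
    set C := ((Finset.range k).image u).max' himg with hC
    have hCmem := Finset.max'_mem _ himg
    obtain ⟨j₀, hj₀k, hj₀⟩ := Finset.mem_image.mp (hC ▸ hCmem)
    rw [Finset.mem_range] at hj₀k
    have hCge : ∀ j, j < k → u j ≤ C := by
      intro j hj
      exact Finset.le_max' _ _ (Finset.mem_image.mpr ⟨j, Finset.mem_range.mpr hj, rfl⟩)
    refine ⟨fun i => (C - u i.val).toNat, ?_, ?_⟩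
    · intro i
      have h1 : 0 ≤ C - u i.val := by linarith [hCge i.val i.isLt]
      have h2 : 0 ≤ C - u (((i:ℕ)+1)%k) := by
        linarith [hCge (((i:ℕ)+1)%k) (Nat.mod_lt _ hk)]
      rw [Int.toNat_of_nonneg h1, Int.toNat_of_nonneg h2]
      have hstep : u (((i:ℕ)+1)%k) = u i.val + c i := by
        rcases Nat.lt_or_ge ((i:ℕ)+1) k with h | h
        · rw [Nat.mod_eq_of_lt h, hustep]
          rw [congrArg c (hmodeq i)]
        · have hik : (i:ℕ)+1 = k := by omega
          rw [hik, Nat.mod_self, hu0]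
          have h5 := hustep i.val
          rw [congrArg c (hmodeq i)] at h5
          rw [hik, huk] at h5
          linarith [h5]
      rw [hstep]; ring
    · intro i
      have h1 : 0 ≤ C - u i.val := by linarith [hCge i.val i.isLt]
      have : ((C - u i.val).toNat : ℝ) = ((C : ℤ) : ℝ) - ((u i.val : ℤ) : ℝ) := by
        rw [show ((C - u i.val).toNat : ℝ) = (((C - u i.val).toNat : ℤ) : ℝ) by norm_cast]
        rw [Int.toNat_of_nonneg h1]; push_cast; ring
      rw [this, ← hj₀]
      exact haux2 j₀ i.val hj₀k.le i.isLt.le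
  · -- variant 2 : m (succ i) = m i + c i,  via m i = u i - C'
    set C := ((Finset.range k).image u).min' himg with hC
    have hCmem := Finset.min'_mem _ himg
    obtain ⟨j₀, hj₀k, hj₀⟩ := Finset.mem_image.mp (hC ▸ hCmem)
    rw [Finset.mem_range] at hj₀k
    have hCle : ∀ j, j < k → C ≤ u j := by
      intro j hj
      exact Finset.min'_le _ _ (Finset.mem_image.mpr ⟨j, Finset.mem_range.mpr hj, rfl⟩)
    refine ⟨fun i => (u i.val - C).toNat, ?_, ?_⟩
    · intro i
      have h1 : 0 ≤ u i.val - C := by linarith [hCle i.val i.isLt]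
      have h2 : 0 ≤ u (((i:ℕ)+1)%k) - C := by
        linarith [hCle (((i:ℕ)+1)%k) (Nat.mod_lt _ hk)]
      rw [Int.toNat_of_nonneg h1, Int.toNat_of_nonneg h2]
      have hstep : u (((i:ℕ)+1)%k) = u i.val + c i := by
        rcases Nat.lt_or_ge ((i:ℕ)+1) k with h | h
        · rw [Nat.mod_eq_of_lt h, hustep]
          rw [congrArg c (hmodeq i)]
        · have hik : (i:ℕ)+1 = k := by omega
          rw [hik, Nat.mod_self, hu0]
          have h5 := hustep i.val
          rw [congrArg c (hmodeq i)] at h5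
          rw [hik, huk] at h5
          linarith [h5]
      rw [hstep]; ring
    · intro i
      have h1 : 0 ≤ u i.val - C := by linarith [hCle i.val i.isLt]
      have : ((u i.val - C).toNat : ℝ) = ((u i.val : ℤ) : ℝ) - ((C : ℤ) : ℝ) := by
        rw [show ((u i.val - C).toNat : ℝ) = (((u i.val - C).toNat : ℤ) : ℝ) by norm_cast]
        rw [Int.toNat_of_nonneg h1]; push_cast; ring
      rw [this, ← hj₀]
      exact haux2 i.val j₀ i.isLt.le hj₀k.le


section pert
variable {V : Type*} [DecidableEq V] (G : SimpleGraph V) [DecidableRel G.Adj]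

set_option maxHeartbeats 2000000 in
lemma pert {ε' d' δ d₂ M L : ℝ} {U W U₁ W₁ : Finset V}
    (hreg : IsRegularPair G ε' d' U W)
    (hε'0 : 0 ≤ ε') (hδ0 : 0 < δ) (hε1 : ε' + δ < 1)
    (hM0 : 0 ≤ M) (hL : 0 < L)
    (hUL : L ≤ (U.card : ℝ)) (hWL : L ≤ (W.card : ℝ))
    (hMδ : 5000 * M ≤ δ^2 * L)
    (hU1 : ((U₁ \ U).card : ℝ) ≤ M) (hU2 : ((U \ U₁).card : ℝ) ≤ M)
    (hW1 : ((W₁ \ W).card : ℝ) ≤ M) (hW2 : ((W \ W₁).card : ℝ) ≤ M)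
    (hd₂ : d₂ ≤ d' - δ) :
    IsRegularPair G (ε' + δ) d₂ U₁ W₁ := by
  have hδ1 : δ ≤ 1 := by linarith
  have hδ2 : δ^2 ≤ δ := by nlinarith
  have hMδL : 5000 * M ≤ δ * L := by nlinarith [mul_le_mul_of_nonneg_right hδ2 hL.le]
  have hML : 5000 * M ≤ L := by nlinarith [mul_le_mul_of_nonneg_right hδ1 hL.le, mul_le_mul_of_nonneg_right hδ2 hL.le]
  set U₂ := U ∩ U₁ with hU₂
  set W₂ := W ∩ W₁ with hW₂
  have hUsd1 : U \ U₂ = U \ U₁ := by ext x; simp only [hU₂, Finset.mem_sdiff, Finset.mem_inter]; tauto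
  have hUsd2 : U₁ \ U₂ = U₁ \ U := by ext x; simp only [hU₂, Finset.mem_sdiff, Finset.mem_inter]; tauto
  have hWsd1 : W \ W₂ = W \ W₁ := by ext x; simp only [hW₂, Finset.mem_sdiff, Finset.mem_inter]; tauto
  have hWsd2 : W₁ \ W₂ = W₁ \ W := by ext x; simp only [hW₂, Finset.mem_sdiff, Finset.mem_inter]; tauto
  have hU₂U : U₂ ⊆ U := Finset.inter_subset_left
  have hU₂U₁ : U₂ ⊆ U₁ := Finset.inter_subset_right
  have hW₂W : W₂ ⊆ W := Finset.inter_subset_left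
  have hW₂W₁ : W₂ ⊆ W₁ := Finset.inter_subset_right
  have hU₂c : (U.card : ℝ) - M ≤ (U₂.card : ℝ) := by
    have h := Finset.card_sdiff_add_card_eq_card hU₂U
    have : ((U \ U₂).card : ℝ) + (U₂.card : ℝ) = (U.card : ℝ) := by exact_mod_cast h
    rw [hUsd1] at this
    linarith
  have hW₂c : (W.card : ℝ) - M ≤ (W₂.card : ℝ) := by
    have h := Finset.card_sdiff_add_card_eq_card hW₂W
    have : ((W \ W₂).card : ℝ) + (W₂.card : ℝ) = (W.card : ℝ) := by exact_mod_cast h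
    rw [hWsd1] at this
    linarith
  have hU₁c : (U.card : ℝ) - M ≤ (U₁.card : ℝ) :=
    le_trans hU₂c (by exact_mod_cast Finset.card_le_card hU₂U₁)
  have hW₁c : (W.card : ℝ) - M ≤ (W₁.card : ℝ) :=
    le_trans hW₂c (by exact_mod_cast Finset.card_le_card hW₂W₁)
  have hLM : L / 2 ≤ L - M := by nlinarith
  have hD0 : (0:ℝ) < L/2 := by linarith
  have b1 : |density G U₁ W₁ - density G U₂ W₂| ≤ 4*M/(L/2) := by
    refine density_diff_le G hU₂U₁ hW₂W₁ M (L/2) hD0 (by linarith) ?_ ?_ ?_ ?_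
    · rw [hUsd2]; exact hU1
    · rw [hWsd2]; exact hW1
    · linarith
    · linarith
  have b2 : |density G U W - density G U₂ W₂| ≤ 4*M/(L/2) := by
    refine density_diff_le G hU₂U hW₂W M (L/2) hD0 (by linarith) ?_ ?_ ?_ ?_
    · rw [hUsd1]; exact hU2
    · rw [hWsd1]; exact hW2
    · linarith
    · linarith
  have hb12 : 4*M/(L/2) ≤ δ/300 := by
    rw [div_le_div_iff₀ (by linarith) (by norm_num)]
    linarith
  have hd₀ : d' ≤ density G U W := hreg.1
  constructor
  · have : density G U₁ W₁ ≥ density G U W - (4*M/(L/2) + 4*M/(L/2)) := by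
      have := abs_sub_le (density G U₁ W₁) (density G U₂ W₂) (density G U W)
      rw [abs_sub_comm (density G U₂ W₂) (density G U W)] at this
      have h12 := abs_le.mp (le_trans this (add_le_add b1 b2))
      linarith [h12.1]
    linarith [hb12, hd₀, hd₂, this, hδ0.le]
  · intro U' hU' W' hW' hcU hcW
    set U'' := U' ∩ U with hU''
    set W'' := W' ∩ W with hW''
    have hU''U' : U'' ⊆ U' := Finset.inter_subset_left
    have hW''W' : W'' ⊆ W' := Finset.inter_subset_left
    have hU''U : U'' ⊆ U := Finset.inter_subset_right
    have hW''W : W'' ⊆ W := Finset.inter_subset_right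
    have hUsd3 : U' \ U'' = U' \ U := by ext x; simp only [hU'', Finset.mem_sdiff, Finset.mem_inter]; tauto
    have hWsd3 : W' \ W'' = W' \ W := by ext x; simp only [hW'', Finset.mem_sdiff, Finset.mem_inter]; tauto
    have hsd4 : ((U' \ U'').card : ℝ) ≤ M := by
      rw [hUsd3]
      refine le_trans ?_ hU1
      exact_mod_cast Finset.card_le_card (Finset.sdiff_subset_sdiff hU' (le_refl _))
    have hsd5 : ((W' \ W'').card : ℝ) ≤ M := by
      rw [hWsd3]
      refine le_trans ?_ hW1
      exact_mod_cast Finset.card_le_card (Finset.sdiff_subset_sdiff hW' (le_refl _))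
    have hU'c : δ*L - M ≤ (U'.card : ℝ) := by
      have h1 : (ε'+δ) * (U₁.card : ℝ) ≤ (U'.card : ℝ) := hcU
      have h2 : δ*(L-M) ≤ δ*(U₁.card : ℝ) :=
        mul_le_mul_of_nonneg_left (by linarith [hU₁c, hUL]) hδ0.le
      have h3 : 0 ≤ ε' * (U₁.card : ℝ) := mul_nonneg hε'0 (Nat.cast_nonneg _)
      have h4 : δ*M ≤ M := by
        have := mul_le_mul_of_nonneg_right hδ1 hM0
        linarith
      linarith [h1, h2, h3, h4]
    have hW'c : δ*L - M ≤ (W'.card : ℝ) := by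
      have h1 : (ε'+δ) * (W₁.card : ℝ) ≤ (W'.card : ℝ) := hcW
      have h2 : δ*(L-M) ≤ δ*(W₁.card : ℝ) :=
        mul_le_mul_of_nonneg_left (by linarith [hW₁c, hWL]) hδ0.le
      have h3 : 0 ≤ ε' * (W₁.card : ℝ) := mul_nonneg hε'0 (Nat.cast_nonneg _)
      have h4 : δ*M ≤ M := by
        have := mul_le_mul_of_nonneg_right hδ1 hM0
        linarith
      linarith [h1, h2, h3, h4]
    have hU''c : (U'.card : ℝ) - M ≤ (U''.card : ℝ) := by
      have h := Finset.card_sdiff_add_card_eq_card hU''U'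
      have h' : ((U' \ U'').card : ℝ) + (U''.card : ℝ) = (U'.card : ℝ) := by exact_mod_cast h
      linarith
    have hW''c : (W'.card : ℝ) - M ≤ (W''.card : ℝ) := by
      have h := Finset.card_sdiff_add_card_eq_card hW''W'
      have h' : ((W' \ W'').card : ℝ) + (W''.card : ℝ) = (W'.card : ℝ) := by exact_mod_cast h
      linarith
    have hD3 : (0:ℝ) < δ*L/2 := by positivity
    have hD3U : δ*L/2 ≤ (U''.card : ℝ) := by linarith [hU'c, hU''c, hMδL, hM0]
    have hD3W : δ*L/2 ≤ (W''.card : ℝ) := by linarith [hW'c, hW''c, hMδL, hM0]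
    have b3 : |density G U' W' - density G U'' W''| ≤ 4*M/(δ*L/2) := by
      refine density_diff_le G hU''U' hW''W' M (δ*L/2) hD3 (by linarith) hsd4 hsd5 hD3U hD3W
    have hb3 : 4*M/(δ*L/2) ≤ δ/300 := by
      rw [div_le_div_iff₀ (by positivity) (by norm_num)]
      nlinarith [hMδ, hM0, sq_nonneg δ]
    have b4 : |density G U'' W'' - density G U W| ≤ ε' := by
      refine hreg.2 U'' hU''U W'' hW''W ?_ ?_
      · have h1 : (ε'+δ)*((U.card:ℝ) - M) ≤ (ε'+δ)*(U₁.card : ℝ) :=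
          mul_le_mul_of_nonneg_left hU₁c (by linarith)
        have h2 : δ*L ≤ δ*(U.card:ℝ) := mul_le_mul_of_nonneg_left hUL hδ0.le
        have h3 : (ε'+δ)*M ≤ M := by
          have := mul_le_mul_of_nonneg_right hε1.le hM0
          linarith
        linarith [hcU, hU''c, h1, h2, h3, hMδL, hM0]
      · have h1 : (ε'+δ)*((W.card:ℝ) - M) ≤ (ε'+δ)*(W₁.card : ℝ) :=
          mul_le_mul_of_nonneg_left hW₁c (by linarith)
        have h2 : δ*L ≤ δ*(W.card:ℝ) := mul_le_mul_of_nonneg_left hWL hδ0.le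
        have h3 : (ε'+δ)*M ≤ M := by
          have := mul_le_mul_of_nonneg_right hε1.le hM0
          linarith
        linarith [hcW, hW''c, h1, h2, h3, hMδL, hM0]
    calc |density G U' W' - density G U₁ W₁|
        ≤ |density G U' W' - density G U'' W''| + |density G U'' W'' - density G U W|
          + |density G U W - density G U₂ W₂| + |density G U₂ W₂ - density G U₁ W₁| := by
          have t1 := abs_sub_le (density G U' W') (density G U'' W'') (density G U W)
          have t2 := abs_sub_le (density G U' W') (density G U W) (density G U₂ W₂)
          have t3 := abs_sub_le (density G U' W') (density G U₂ W₂) (density G U₁ W₁)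
          linarith
      _ ≤ δ/300 + ε' + δ/300 + δ/300 := by
          rw [abs_sub_comm (density G U₂ W₂) (density G U₁ W₁)]
          exact add_le_add (add_le_add (add_le_add (le_trans b3 hb3) b4) (le_trans b2 hb12)) (le_trans b1 hb12)
      _ ≤ ε' + δ := by linarith


end pert

lemma deg_arith {d'' d δ M L β β₁ t : ℝ} (hdd : d ≤ d'' - δ) (hd1 : d'' ≤ 1)
    (hδ0 : 0 < δ) (hδ1 : δ ≤ 1) (hL : 0 < L) (hβL : L ≤ β) (hMδL : 5000*M ≤ δ*L)
    (hM0 : 0 ≤ M) (hβ₁ : β₁ ≤ β + M) (hβ₁0 : 0 ≤ β₁)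
    (hdeg : d''*β - M ≤ t) (ht0 : 0 ≤ t) : d*β₁ ≤ t := by
  rcases le_or_gt d 0 with h | h
  · exact le_trans (mul_nonpos_of_nonpos_of_nonneg h hβ₁0) ht0
  · have hβ0 : 0 ≤ β := le_trans hL.le hβL
    have h1 : d*β₁ ≤ d*(β+M) := mul_le_mul_of_nonneg_left hβ₁ h.le
    have hδβ : δ*L ≤ δ*β := mul_le_mul_of_nonneg_left hβL hδ0.le
    have hd1' : d ≤ 1 := by linarith
    have h2 : δ*β ≤ (d''-d)*β := mul_le_mul_of_nonneg_right (by linarith) hβ0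
    have h3 : d*M ≤ M := by nlinarith
    nlinarith [h1, h2, h3, hδβ, hMδL]

set_option maxHeartbeats 4000000 in
theorem stmt_10 {V : Type*} [Fintype V] [DecidableEq V] (G : SimpleGraph V)
    [DecidableRel G.Adj] (k n : ℕ) (hk : 0 < k) (ξ ε' d' : ℝ)
    (hξ0 : 0 < ξ) (hξ : ξ ≤ 1 / (20 * (k : ℝ) ^ 2))
    (A B : Finset V) (hdisj : Disjoint A B) (hunion : A ∪ B = Finset.univ)
    (hAcard : A.card = n) (hBcard : B.card = n)
    (hbip : ∀ u v, G.Adj u v → (u ∈ A ↔ v ∈ B))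
    (A' B' : Fin k → Finset V)
    (hA'union : Finset.univ.biUnion A' = A)
    (hA'disj : ∀ i j, i ≠ j → Disjoint (A' i) (A' j))
    (hB'union : Finset.univ.biUnion B' = B)
    (hB'disj : ∀ i j, i ≠ j → Disjoint (B' i) (B' j))
    (hsize : ∀ i, (n : ℝ) / (2 * k) ≤ ((A' i).card : ℝ) ∧ (n : ℝ) / (2 * k) ≤ ((B' i).card : ℝ))
    (hsup : ∀ i, IsSuperRegularPair G ε' d' (A' i) (B' i))
    (hregnext : ∀ i : Fin k,
      IsRegularPair G ε' d' (A' i) (B' ⟨((i : ℕ) + 1) % k, Nat.mod_lt _ hk⟩))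
    (a' b' : Fin k → ℤ)
    (ha'bound : ∀ i, (a' i : ℝ) ≤ ξ * n) (hb'bound : ∀ i, (b' i : ℝ) ≤ ξ * n)
    (ha'sum : ∑ i, a' i = 0) (hb'sum : ∑ i, b' i = 0) :
    ∃ A₁ B₁ : Fin k → Finset V,
      Finset.univ.biUnion A₁ = A ∧ (∀ i j, i ≠ j → Disjoint (A₁ i) (A₁ j)) ∧
      Finset.univ.biUnion B₁ = B ∧ (∀ i j, i ≠ j → Disjoint (B₁ i) (B₁ j)) ∧
      (∀ i, ((A₁ i).card : ℤ) = ((A' i).card : ℤ) + a' i) ∧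
      (∀ i, ((B₁ i).card : ℤ) = ((B' i).card : ℤ) + b' i) ∧
      (∀ i, IsSuperRegularPair G (ε' + 100 * k * Real.sqrt ξ)
        (d' - 100 * (k : ℝ) ^ 2 * Real.sqrt ξ - ε') (A₁ i) (B₁ i)) ∧
      (∀ i : Fin k, IsRegularPair G (ε' + 100 * k * Real.sqrt ξ)
        (d' - 100 * (k : ℝ) ^ 2 * Real.sqrt ξ - ε')
        (A₁ i) (B₁ ⟨((i : ℕ) + 1) % k, Nat.mod_lt _ hk⟩)) := by
  classical
  set r := Real.sqrt ξ with hrdef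
  have hr0 : 0 < r := Real.sqrt_pos.mpr hξ0
  have hr2 : r^2 = ξ := Real.sq_sqrt hξ0.le
  have hk1 : (1:ℝ) ≤ (k:ℝ) := by exact_mod_cast hk
  have hkR0 : (0:ℝ) < (k:ℝ) := by linarith
  have i₀ : Fin k := ⟨0, hk⟩
  -- ε' ≥ 0
  have hε'0 : 0 ≤ ε' := by
    by_contra hneg
    push_neg at hneg
    have h := (hsup i₀).1.2 (A' i₀) (le_refl _) (B' i₀) (le_refl _)
      (le_trans (mul_nonpos_of_nonpos_of_nonneg hneg.le (Nat.cast_nonneg _)) (Nat.cast_nonneg _))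
      (le_trans (mul_nonpos_of_nonpos_of_nonneg hneg.le (Nat.cast_nonneg _)) (Nat.cast_nonneg _))
    rw [sub_self, abs_zero] at h
    linarith
  have hd'1 : d' ≤ 1 := le_trans (hsup i₀).1.1 (density_le_one G _ _)
  have hk2ξ : (k:ℝ)^2 * ξ ≤ 1/20 := by
    rw [le_div_iff₀ (by positivity)] at hξ
    linarith
  have hkr : (k:ℝ) * r ≤ 1/4 := by
    have h16 : ((k:ℝ)*r)^2 ≤ 1/20 := by
      calc ((k:ℝ)*r)^2 = (k:ℝ)^2 * r^2 := by ring
        _ = (k:ℝ)^2 * ξ := by rw [hr2]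
        _ ≤ 1/20 := hk2ξ
    nlinarith [mul_pos hkR0 hr0]
  have hkk2 : 100*(k:ℝ)*r ≤ 100*(k:ℝ)^2*r := by
    have h9 : (0:ℝ) ≤ ((k:ℝ)^2 - k) * r := mul_nonneg (by nlinarith [hk1]) hr0.le
    nlinarith [h9]
  by_cases hcase : 1 ≤ ε' + 100 * (k:ℝ) * r
  · -- trivial case : ε ≥ 1, d ≤ 0
    have hdneg : d' - 100 * (k:ℝ)^2 * r - ε' ≤ 0 := by linarith
    -- lower bounds on a', b'
    have hklow : ∀ (c' : Fin k → ℤ), (∀ i, (c' i : ℝ) ≤ ξ * n) → (∑ i, c' i = 0) →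
        ∀ i, -((k:ℝ) * (ξ * n)) ≤ (c' i : ℝ) := by
      intro c' hc' hsum' i
      have herase : c' i + ∑ j ∈ Finset.univ.erase i, c' j = 0 := by
        rw [Finset.add_sum_erase _ _ (Finset.mem_univ i)]; exact hsum'
      have hsumR : ((∑ j ∈ Finset.univ.erase i, c' j : ℤ) : ℝ)
          ≤ ((Finset.univ.erase i).card : ℝ) * (ξ * n) := by
        push_cast
        refine le_trans (Finset.sum_le_card_nsmul _ _ (ξ*n) (fun j _ => hc' j)) ?_
        rw [nsmul_eq_mul]
      have hcard : ((Finset.univ.erase i).card : ℝ) ≤ (k:ℝ) := by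
        have := Finset.card_erase_le (a := i) (s := (Finset.univ : Finset (Fin k)))
        have h2 : (Finset.univ : Finset (Fin k)).card = k := by simp
        exact_mod_cast le_trans this (le_of_eq h2)
      have hξn : (0:ℝ) ≤ ξ * n := by positivity
      have : (c' i : ℝ) = -((∑ j ∈ Finset.univ.erase i, c' j : ℤ) : ℝ) := by
        have : (c' i : ℝ) + ((∑ j ∈ Finset.univ.erase i, c' j : ℤ) : ℝ) = 0 := by
          exact_mod_cast congrArg (fun z : ℤ => (z : ℝ)) herase
        linarith
      rw [this]
      nlinarith [mul_le_mul_of_nonneg_right hcard hξn]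
    have hMn : (k:ℝ) * (ξ * n) ≤ (n:ℝ)/(2*(k:ℝ)) := by
      rw [le_div_iff₀ (by positivity)]
      have : (k:ℝ) * (ξ * n) * (2*k) = 2*((k:ℝ)^2*ξ)*n := by ring
      rw [this]
      nlinarith [hk2ξ, (Nat.cast_nonneg n : (0:ℝ) ≤ (n:ℝ))]
    have hfA : ∀ i, (0:ℤ) ≤ ((A' i).card : ℤ) + a' i := by
      intro i
      have h1 := hklow a' ha'bound ha'sum i
      have h2 := (hsize i).1
      have : (0:ℝ) ≤ ((A' i).card : ℝ) + (a' i : ℝ) := by linarith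
      exact_mod_cast this
    have hfB : ∀ i, (0:ℤ) ≤ ((B' i).card : ℤ) + b' i := by
      intro i
      have h1 := hklow b' hb'bound hb'sum i
      have h2 := (hsize i).2
      have : (0:ℝ) ≤ ((B' i).card : ℝ) + (b' i : ℝ) := by linarith
      exact_mod_cast this
    have hsumA' : ∑ i, ((A' i).card : ℤ) = (A.card : ℤ) := by
      rw [← hA'union, Finset.card_biUnion (fun i _ j _ h => hA'disj i j h)]
      push_cast; rfl
    have hsumB' : ∑ i, ((B' i).card : ℤ) = (B.card : ℤ) := by
      rw [← hB'union, Finset.card_biUnion (fun i _ j _ h => hB'disj i j h)]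
      push_cast; rfl
    have hsumfA : ∑ i, (((A' i).card : ℤ) + a' i).toNat = A.card := by
      have : ((∑ i, (((A' i).card : ℤ) + a' i).toNat : ℕ) : ℤ) = (A.card : ℤ) := by
        push_cast
        rw [Finset.sum_congr rfl (fun i _ => Int.toNat_of_nonneg (hfA i))]
        rw [Finset.sum_add_distrib, ha'sum, add_zero, hsumA']
      exact_mod_cast this
    have hsumfB : ∑ i, (((B' i).card : ℤ) + b' i).toNat = B.card := by
      have : ((∑ i, (((B' i).card : ℤ) + b' i).toNat : ℕ) : ℤ) = (B.card : ℤ) := by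
        push_cast
        rw [Finset.sum_congr rfl (fun i _ => Int.toNat_of_nonneg (hfB i))]
        rw [Finset.sum_add_distrib, hb'sum, add_zero, hsumB']
      exact_mod_cast this
    obtain ⟨P, hPun, hPdisj, hPcard⟩ := exists_partition k A _ hsumfA
    obtain ⟨Q, hQun, hQdisj, hQcard⟩ := exists_partition k B _ hsumfB
    refine ⟨P, Q, hPun, hPdisj, hQun, hQdisj, ?_, ?_, ?_, ?_⟩
    · intro i
      rw [hPcard i, Int.toNat_of_nonneg (hfA i)]
    · intro i
      rw [hQcard i, Int.toNat_of_nonneg (hfB i)]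
    · intro i
      exact trivial_super G hcase hdneg _ _
    · intro i
      exact (trivial_super G hcase hdneg _ _).1
  · push_neg at hcase
    have hε'1 : ε' ≤ 1 := by nlinarith [mul_pos hkR0 hr0]
    by_cases hn : n = 0
    · -- degenerate : all a' b' are zero
      have haz : ∀ i ∈ Finset.univ, a' i = 0 := by
        rw [← Finset.sum_eq_zero_iff_of_nonpos]
        · exact ha'sum
        · intro i _
          have := ha'bound i
          rw [hn] at this
          push_cast at this
          exact_mod_cast (by linarith : (a' i : ℝ) ≤ 0)
      have hbz : ∀ i ∈ Finset.univ, b' i = 0 := by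
        rw [← Finset.sum_eq_zero_iff_of_nonpos]
        · exact hb'sum
        · intro i _
          have := hb'bound i
          rw [hn] at this
          push_cast at this
          exact_mod_cast (by linarith : (b' i : ℝ) ≤ 0)
      refine ⟨A', B', hA'union, hA'disj, hB'union, hB'disj, ?_, ?_, ?_, ?_⟩
      · intro i; rw [haz i (Finset.mem_univ i), add_zero]
      · intro i; rw [hbz i (Finset.mem_univ i), add_zero]
      · intro i
        refine mono_super G (hsup i) hε'0 (by nlinarith [mul_pos hkR0 hr0]) (by nlinarith [mul_pos hkR0 hr0, hε'0])
      · intro i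
        refine mono_regular G (hregnext i) hε'0 (by nlinarith [mul_pos hkR0 hr0]) (by nlinarith [mul_pos hkR0 hr0, hε'0])
    · -- MAIN CASE
      have hn0 : (0:ℝ) < (n:ℝ) := by exact_mod_cast Nat.pos_of_ne_zero hn
      set L : ℝ := (n:ℝ) / (2*(k:ℝ)) with hLdef
      have hL0 : 0 < L := by positivity
      set M : ℝ := (k:ℝ) * (ξ * (n:ℝ)) with hMdef
      have hM0 : 0 ≤ M := by positivity
      set δ : ℝ := 100 * (k:ℝ) * r with hδdef
      have hδ0 : 0 < δ := by positivity
      have hδ1 : δ ≤ 1 := by linarith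
      have hMδ : 5000 * M ≤ δ^2 * L := by
        have e : δ^2 = 10000*(k:ℝ)^2*(r^2) := by rw [hδdef]; ring
        have e2 : δ^2 * L = 5000 * M := by
          rw [e, hr2, hMdef, hLdef]
          field_simp
          ring
        linarith [e2]
      have hMδL : 5000 * M ≤ δ * L := by
        have h1 : δ^2*L ≤ δ*L := mul_le_mul_of_nonneg_right (by nlinarith) hL0.le
        linarith
      have hd₂ : d' - 100 * (k:ℝ)^2 * r - ε' ≤ d' - δ := by
        rw [hδdef]; linarith [hkk2, hε'0]
      set nx : Fin k → Fin k := fun i => ⟨((i:ℕ)+1)%k, Nat.mod_lt _ hk⟩ with hnxdef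
      set pv : Fin k → Fin k := fun i => ⟨((i:ℕ)+(k-1))%k, Nat.mod_lt _ hk⟩ with hpvdef
      have hnxpv : ∀ i, nx (pv i) = i := by
        intro i
        apply Fin.ext
        show (((i:ℕ)+(k-1))%k + 1) % k = (i:ℕ)
        rw [Nat.mod_add_mod]
        have e : (i:ℕ) + (k-1) + 1 = (i:ℕ) + k := by omega
        rw [e, Nat.add_mod_right, Nat.mod_eq_of_lt i.isLt]
      have hpvnx : ∀ i, pv (nx i) = i := by
        intro i
        apply Fin.ext
        show (((i:ℕ)+1)%k + (k-1)) % k = (i:ℕ)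
        rw [Nat.mod_add_mod]
        have e : (i:ℕ) + 1 + (k-1) = (i:ℕ) + k := by omega
        rw [e, Nat.add_mod_right, Nat.mod_eq_of_lt i.isLt]
      have hnxpv' : ∀ i : Fin k, (⟨(((pv i) : ℕ)+1)%k, Nat.mod_lt _ hk⟩ : Fin k) = i := hnxpv
      have hnxinj : ∀ i j : Fin k, nx i = nx j → i = j := by
        intro i j h
        rw [← hpvnx i, h, hpvnx j]
      have hpvinj : ∀ i j : Fin k, pv i = pv j → i = j := by
        intro i j h
        rw [← hnxpv i, h, hnxpv j]
      have hbij : Function.Bijective nx :=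
        ⟨fun i j h => hnxinj i j h, fun j => ⟨pv j, hnxpv j⟩⟩
      have hEquivA : ∑ i, a' (nx i) = 0 := by
        rw [Fintype.sum_bijective nx hbij (fun i => a' (nx i)) a' (fun i => rfl)]
        exact ha'sum
      have hEquivB : ∑ i, b' (nx i) = 0 := by
        rw [Fintype.sum_bijective nx hbij (fun i => b' (nx i)) b' (fun i => rfl)]
        exact hb'sum
      have hξn0 : (0:ℝ) ≤ ξ * (n:ℝ) := by positivity
      obtain ⟨⟨mA, hmArec0, hmAbd⟩, -⟩ :=
        exists_move k hk (fun i => a' (nx i)) (ξ*(n:ℝ)) hξn0 (fun i => ha'bound _) hEquivA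
      obtain ⟨-, ⟨mB, hmBrec0, hmBbd⟩⟩ :=
        exists_move k hk (fun i => b' (nx i)) (ξ*(n:ℝ)) hξn0 (fun i => hb'bound _) hEquivB
      have hmArec : ∀ i : Fin k, (mA i : ℤ) = mA (nx i) + a' (nx i) := hmArec0
      have hmBrec : ∀ i : Fin k, (mB (nx i) : ℤ) = mB i + b' (nx i) := hmBrec0
      have hmA : ∀ i, (mA (pv i) : ℤ) = mA i + a' i := by
        intro i
        have h := hmArec (pv i)
        rwa [hnxpv i] at h
      have hmB : ∀ i, (mB i : ℤ) = mB (pv i) + b' i := by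
        intro i
        have h := hmBrec (pv i)
        rwa [hnxpv i] at h
      have hmAM : ∀ i, (mA i : ℝ) ≤ M := fun i => hmAbd i
      have hmBM : ∀ i, (mB i : ℝ) ≤ M := fun i => hmBbd i
      set GA : Fin k → Finset V := fun i => (A' i).filter (fun u =>
        (density G (A' i) (B' (nx i)) - ε') * ((B' (nx i)).card : ℝ)
          ≤ (((B' (nx i)).filter (fun w => G.Adj u w)).card : ℝ)) with hGAdef
      set GB : Fin k → Finset V := fun i => (B' (nx i)).filter (fun w =>
        (density G (A' i) (B' (nx i)) - ε') * ((A' i).card : ℝ)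
          ≤ (((A' i).filter (fun u => G.Adj u w)).card : ℝ)) with hGBdef
      have hGAcard : ∀ i, (1-ε') * ((A' i).card : ℝ) ≤ ((GA i).card : ℝ) := fun i =>
        good_count_left G (hregnext i) hε'0 hε'1
      have hGBcard : ∀ i, (1-ε') * (((B' (nx i)).card : ℝ)) ≤ ((GB i).card : ℝ) := fun i =>
        good_count_right G (hregnext i) hε'0 hε'1
      have hMleps : M ≤ (1-ε') * L := by
        have h2 : δ*L ≤ (1-ε')*L := mul_le_mul_of_nonneg_right (by linarith) hL0.le
        linarith [hMδL, hM0]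
      have hmAle : ∀ i, mA i ≤ (GA i).card := by
        intro i
        have h2 : (1-ε')*L ≤ (1-ε')*((A' i).card:ℝ) :=
          mul_le_mul_of_nonneg_left (hsize i).1 (by linarith)
        have h3 : (mA i : ℝ) ≤ ((GA i).card : ℝ) := by linarith [hGAcard i, hmAM i]
        exact_mod_cast h3
      have hmBle : ∀ i, mB i ≤ (GB i).card := by
        intro i
        have h2 : (1-ε')*L ≤ (1-ε')*(((B' (nx i)).card):ℝ) :=
          mul_le_mul_of_nonneg_left (hsize (nx i)).2 (by linarith)
        have h3 : (mB i : ℝ) ≤ ((GB i).card : ℝ) := by linarith [hGBcard i, hmBM i]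
        exact_mod_cast h3
      choose S hSsub hScard using fun i => Finset.exists_subset_card_eq (hmAle i)
      choose T hTsub hTcard using fun i => Finset.exists_subset_card_eq (hmBle i)
      have hSA' : ∀ i, S i ⊆ A' i := fun i => (hSsub i).trans (Finset.filter_subset _ _)
      have hTB' : ∀ i, T i ⊆ B' (nx i) := fun i => (hTsub i).trans (Finset.filter_subset _ _)
      have hTpvB' : ∀ i, T (pv i) ⊆ B' i := by
        intro i
        have h := hTB' (pv i)
        rwa [hnxpv i] at h
      have hSM : ∀ i, ((S i).card : ℝ) ≤ M := by
        intro i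
        rw [hScard i]
        exact hmAM i
      have hTM : ∀ i, ((T i).card : ℝ) ≤ M := by
        intro i
        rw [hTcard i]
        exact hmBM i
      set A₁ : Fin k → Finset V := fun i => (A' i \ S i) ∪ S (pv i) with hA₁def
      set B₁ : Fin k → Finset V := fun i => (B' i \ T (pv i)) ∪ T i with hB₁def
      -- difference bounds
      have hA1d1 : ∀ i, ((A₁ i \ A' i).card : ℝ) ≤ M := by
        intro i
        have hsub : A₁ i \ A' i ⊆ S (pv i) := by
          intro x hx
          rw [Finset.mem_sdiff] at hx
          rcases Finset.mem_union.mp hx.1 with h | h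
          · exact absurd (Finset.mem_sdiff.mp h).1 hx.2
          · exact h
        exact le_trans (by exact_mod_cast Finset.card_le_card hsub) (hSM (pv i))
      have hA1d2 : ∀ i, ((A' i \ A₁ i).card : ℝ) ≤ M := by
        intro i
        have hsub : A' i \ A₁ i ⊆ S i := by
          intro x hx
          rw [Finset.mem_sdiff] at hx
          by_contra hxS
          exact hx.2 (Finset.mem_union_left _ (Finset.mem_sdiff.mpr ⟨hx.1, hxS⟩))
        exact le_trans (by exact_mod_cast Finset.card_le_card hsub) (hSM i)
      have hB1d1 : ∀ i, ((B₁ i \ B' i).card : ℝ) ≤ M := by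
        intro i
        have hsub : B₁ i \ B' i ⊆ T i := by
          intro x hx
          rw [Finset.mem_sdiff] at hx
          rcases Finset.mem_union.mp hx.1 with h | h
          · exact absurd (Finset.mem_sdiff.mp h).1 hx.2
          · exact h
        exact le_trans (by exact_mod_cast Finset.card_le_card hsub) (hTM i)
      have hB1d2 : ∀ i, ((B' i \ B₁ i).card : ℝ) ≤ M := by
        intro i
        have hsub : B' i \ B₁ i ⊆ T (pv i) := by
          intro x hx
          rw [Finset.mem_sdiff] at hx
          by_contra hxT
          exact hx.2 (Finset.mem_union_left _ (Finset.mem_sdiff.mpr ⟨hx.1, hxT⟩))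
        exact le_trans (by exact_mod_cast Finset.card_le_card hsub) (hTM (pv i))
      -- cardinalities
      have hdisjA : ∀ i, Disjoint (A' i \ S i) (S (pv i)) := by
        intro i
        by_cases h : pv i = i
        · rw [h]; exact Finset.sdiff_disjoint
        · exact (hA'disj i (pv i) (fun e => h e.symm)).mono Finset.sdiff_subset (hSA' (pv i))
      have hdisjB : ∀ i, Disjoint (B' i \ T (pv i)) (T i) := by
        intro i
        by_cases h : nx i = i
        · have hpv : pv i = i := by
            calc pv i = pv (nx i) := by rw [h]
              _ = i := hpvnx i
          rw [hpv]
          exact Finset.sdiff_disjoint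
        · exact (hB'disj i (nx i) (fun e => h e.symm)).mono Finset.sdiff_subset (hTB' i)
      have hA1card : ∀ i, ((A₁ i).card : ℤ) = ((A' i).card : ℤ) + a' i := by
        intro i
        have hSle : (S i).card ≤ (A' i).card := Finset.card_le_card (hSA' i)
        have e1 : (A₁ i).card = ((A' i).card - (S i).card) + (S (pv i)).card := by
          rw [Finset.card_union_of_disjoint (hdisjA i), Finset.card_sdiff_of_subset (hSA' i)]
        have e2 : ((A₁ i).card : ℤ) = ((A' i).card : ℤ) - ((S i).card : ℤ) + ((S (pv i)).card : ℤ) := by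
          rw [e1]
          push_cast [Nat.cast_sub hSle]
          ring
        rw [e2]
        simp only [hScard]
        have := hmA i
        omega
      have hB1card : ∀ i, ((B₁ i).card : ℤ) = ((B' i).card : ℤ) + b' i := by
        intro i
        have hTle : (T (pv i)).card ≤ (B' i).card := Finset.card_le_card (hTpvB' i)
        have e1 : (B₁ i).card = ((B' i).card - (T (pv i)).card) + (T i).card := by
          rw [Finset.card_union_of_disjoint (hdisjB i), Finset.card_sdiff_of_subset (hTpvB' i)]
        have e2 : ((B₁ i).card : ℤ) = ((B' i).card : ℤ) - ((T (pv i)).card : ℤ) + ((T i).card : ℤ) := by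
          rw [e1]
          push_cast [Nat.cast_sub hTle]
          ring
        rw [e2]
        simp only [hTcard]
        have := hmB i
        omega
      -- unions
      have hA1un : Finset.univ.biUnion A₁ = A := by
        apply Finset.Subset.antisymm
        · intro x hx
          obtain ⟨i, -, hxi⟩ := Finset.mem_biUnion.mp hx
          rw [← hA'union]
          rcases Finset.mem_union.mp hxi with h | h
          · exact Finset.mem_biUnion.mpr ⟨i, Finset.mem_univ _, (Finset.mem_sdiff.mp h).1⟩
          · exact Finset.mem_biUnion.mpr ⟨pv i, Finset.mem_univ _, hSA' (pv i) h⟩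
        · intro x hx
          rw [← hA'union] at hx
          obtain ⟨i, -, hxi⟩ := Finset.mem_biUnion.mp hx
          apply Finset.mem_biUnion.mpr
          by_cases h : x ∈ S i
          · refine ⟨nx i, Finset.mem_univ _, ?_⟩
            apply Finset.mem_union_right
            rw [hpvnx i]
            exact h
          · exact ⟨i, Finset.mem_univ _, Finset.mem_union_left _ (Finset.mem_sdiff.mpr ⟨hxi, h⟩)⟩
      have hB1un : Finset.univ.biUnion B₁ = B := by
        apply Finset.Subset.antisymm
        · intro x hx
          obtain ⟨i, -, hxi⟩ := Finset.mem_biUnion.mp hx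
          rw [← hB'union]
          rcases Finset.mem_union.mp hxi with h | h
          · exact Finset.mem_biUnion.mpr ⟨i, Finset.mem_univ _, (Finset.mem_sdiff.mp h).1⟩
          · exact Finset.mem_biUnion.mpr ⟨nx i, Finset.mem_univ _, hTB' i h⟩
        · intro x hx
          rw [← hB'union] at hx
          obtain ⟨i, -, hxi⟩ := Finset.mem_biUnion.mp hx
          apply Finset.mem_biUnion.mpr
          by_cases h : x ∈ T (pv i)
          · exact ⟨pv i, Finset.mem_univ _, Finset.mem_union_right _ h⟩
          · exact ⟨i, Finset.mem_univ _, Finset.mem_union_left _ (Finset.mem_sdiff.mpr ⟨hxi, h⟩)⟩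
      -- disjointness
      have hA1disj : ∀ i j, i ≠ j → Disjoint (A₁ i) (A₁ j) := by
        intro i j hij
        have d11 : Disjoint (A' i \ S i) (A' j \ S j) :=
          (hA'disj i j hij).mono Finset.sdiff_subset Finset.sdiff_subset
        have d12 : Disjoint (A' i \ S i) (S (pv j)) := by
          by_cases h : pv j = i
          · rw [h]; exact Finset.sdiff_disjoint
          · exact (hA'disj i (pv j) (fun e => h e.symm)).mono Finset.sdiff_subset (hSA' (pv j))
        have d21 : Disjoint (S (pv i)) (A' j \ S j) := by
          by_cases h : pv i = j
          · rw [h]; exact Finset.sdiff_disjoint.symm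
          · exact ((hA'disj (pv i) j h).mono (hSA' (pv i)) Finset.sdiff_subset)
        have d22 : Disjoint (S (pv i)) (S (pv j)) :=
          (hA'disj (pv i) (pv j) (fun e => hij (hpvinj _ _ e))).mono (hSA' (pv i)) (hSA' (pv j))
        exact Finset.disjoint_union_left.mpr
          ⟨Finset.disjoint_union_right.mpr ⟨d11, d12⟩,
           Finset.disjoint_union_right.mpr ⟨d21, d22⟩⟩
      have hB1disj : ∀ i j, i ≠ j → Disjoint (B₁ i) (B₁ j) := by
        intro i j hij
        have d11 : Disjoint (B' i \ T (pv i)) (B' j \ T (pv j)) :=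
          (hB'disj i j hij).mono Finset.sdiff_subset Finset.sdiff_subset
        have d12 : Disjoint (B' i \ T (pv i)) (T j) := by
          by_cases h : nx j = i
          · have : pv i = j := by
              calc pv i = pv (nx j) := by rw [h]
                _ = j := hpvnx j
            rw [this]
            have hTj : T j ⊆ B' i := by rw [← h]; exact hTB' j
            exact Finset.sdiff_disjoint
          · exact (hB'disj i (nx j) (fun e => h e.symm)).mono Finset.sdiff_subset (hTB' j)
        have d21 : Disjoint (T i) (B' j \ T (pv j)) := by
          by_cases h : nx i = j
          · have : pv j = i := by
              calc pv j = pv (nx i) := by rw [h]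
                _ = i := hpvnx i
            rw [this, ← h]
            exact Finset.sdiff_disjoint.symm
          · exact (hB'disj (nx i) j h).mono (hTB' i) Finset.sdiff_subset
        have d22 : Disjoint (T i) (T j) :=
          (hB'disj (nx i) (nx j) (fun e => hij (hnxinj _ _ e))).mono (hTB' i) (hTB' j)
        exact Finset.disjoint_union_left.mpr
          ⟨Finset.disjoint_union_right.mpr ⟨d11, d12⟩,
           Finset.disjoint_union_right.mpr ⟨d21, d22⟩⟩
      -- size upper bounds
      have hB1le : ∀ i, ((B₁ i).card : ℝ) ≤ ((B' i).card : ℝ) + M := by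
        intro i
        have h1 : (B₁ i).card ≤ (B' i \ T (pv i)).card + (T i).card := Finset.card_union_le _ _
        have h2 : (B' i \ T (pv i)).card ≤ (B' i).card := Finset.card_le_card Finset.sdiff_subset
        have h3 := hTM i
        have h4 : ((B₁ i).card : ℝ) ≤ ((B' i \ T (pv i)).card : ℝ) + ((T i).card : ℝ) := by
          exact_mod_cast h1
        have h5 : ((B' i \ T (pv i)).card : ℝ) ≤ ((B' i).card : ℝ) := by exact_mod_cast h2
        linarith
      have hA1le : ∀ i, ((A₁ i).card : ℝ) ≤ ((A' i).card : ℝ) + M := by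
        intro i
        have h1 : (A₁ i).card ≤ (A' i \ S i).card + (S (pv i)).card := Finset.card_union_le _ _
        have h2 : (A' i \ S i).card ≤ (A' i).card := Finset.card_le_card Finset.sdiff_subset
        have h3 := hSM (pv i)
        have h4 : ((A₁ i).card : ℝ) ≤ ((A' i \ S i).card : ℝ) + ((S (pv i)).card : ℝ) := by
          exact_mod_cast h1
        have h5 : ((A' i \ S i).card : ℝ) ≤ ((A' i).card : ℝ) := by exact_mod_cast h2
        linarith
      -- super-regularity
      have hsupers : ∀ i, IsSuperRegularPair G (ε' + δ)
          (d' - 100*(k:ℝ)^2*r - ε') (A₁ i) (B₁ i) := by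
        intro i
        refine ⟨pert G (hsup i).1 hε'0 hδ0 hcase hM0 hL0 (hsize i).1 (hsize i).2 hMδ
          (hA1d1 i) (hA1d2 i) (hB1d1 i) (hB1d2 i) hd₂, ?_, ?_⟩
        · intro u hu
          have hdegpert := filter_card_pert (fun w => G.Adj u w) (B' i) (B₁ i)
          have hcast : (((B' i).filter (fun w => G.Adj u w)).card : ℝ)
              ≤ (((B₁ i).filter (fun w => G.Adj u w)).card : ℝ) + ((B' i \ B₁ i).card : ℝ) := by
            exact_mod_cast hdegpert
          rcases Finset.mem_union.mp hu with h | h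
          · have hdeg := (hsup i).2.1 u (Finset.mem_sdiff.mp h).1
            refine deg_arith (d'' := d') (by linarith [hd₂]) hd'1 hδ0 hδ1 hL0 (hsize i).2
              hMδL hM0 (hB1le i) (Nat.cast_nonneg _) ?_ (Nat.cast_nonneg _)
            linarith [hB1d2 i]
          · have hmem := Finset.mem_filter.mp (hSsub (pv i) h)
            have hthr := hmem.2
            rw [hnxpv i] at hthr
            have hd₀ : d' ≤ density G (A' (pv i)) (B' (nx (pv i))) := (hregnext (pv i)).1
            rw [hnxpv i] at hd₀
            have hdeg : (d' - ε') * ((B' i).card : ℝ)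
                ≤ (((B' i).filter (fun w => G.Adj u w)).card : ℝ) := by
              refine le_trans ?_ hthr
              exact mul_le_mul_of_nonneg_right (by linarith) (Nat.cast_nonneg _)
            refine deg_arith (d'' := d' - ε') ?_ (by linarith) hδ0 hδ1 hL0 (hsize i).2
              hMδL hM0 (hB1le i) (Nat.cast_nonneg _) ?_ (Nat.cast_nonneg _)
            · rw [hδdef]; linarith [hkk2]
            · linarith [hB1d2 i]
        · intro w hw
          have hdegpert := filter_card_pert (fun u => G.Adj u w) (A' i) (A₁ i)
          have hcast : (((A' i).filter (fun u => G.Adj u w)).card : ℝ)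
              ≤ (((A₁ i).filter (fun u => G.Adj u w)).card : ℝ) + ((A' i \ A₁ i).card : ℝ) := by
            exact_mod_cast hdegpert
          rcases Finset.mem_union.mp hw with h | h
          · have hdeg := (hsup i).2.2 w (Finset.mem_sdiff.mp h).1
            refine deg_arith (d'' := d') (by linarith [hd₂]) hd'1 hδ0 hδ1 hL0 (hsize i).1
              hMδL hM0 (hA1le i) (Nat.cast_nonneg _) ?_ (Nat.cast_nonneg _)
            linarith [hA1d2 i]
          · have hmem := Finset.mem_filter.mp (hTsub i h)
            have hthr := hmem.2
            have hd₀ : d' ≤ density G (A' i) (B' (nx i)) := (hregnext i).1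
            have hdeg : (d' - ε') * ((A' i).card : ℝ)
                ≤ (((A' i).filter (fun u => G.Adj u w)).card : ℝ) := by
              refine le_trans ?_ hthr
              exact mul_le_mul_of_nonneg_right (by linarith) (Nat.cast_nonneg _)
            refine deg_arith (d'' := d' - ε') ?_ (by linarith) hδ0 hδ1 hL0 (hsize i).1
              hMδL hM0 (hA1le i) (Nat.cast_nonneg _) ?_ (Nat.cast_nonneg _)
            · rw [hδdef]; linarith [hkk2]
            · linarith [hA1d2 i]
      have hregs : ∀ i, IsRegularPair G (ε'+δ)
          (d' - 100*(k:ℝ)^2*r - ε') (A₁ i) (B₁ (nx i)) := by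
        intro i
        exact pert G (hregnext i) hε'0 hδ0 hcase hM0 hL0 (hsize i).1 (hsize (nx i)).2 hMδ
          (hA1d1 i) (hA1d2 i) (hB1d1 (nx i)) (hB1d2 (nx i)) hd₂
      exact ⟨A₁, B₁, hA1un, hA1disj, hB1un, hB1disj, hA1card, hB1card,
        fun i => hsupers i, fun i => hregs i⟩
end
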